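/- arXiv:1109.5632 — 8 statements merged into one kernel-verified Lean document; each statement's English description precedes it below -/
import Mathlib

section
/- Let Ω ⊆ ℂ^h be a convex open set and let ψ, α_1, …, α_h : Ω → ℂ be holomorphic functions. Define ω : Ω → ℂ^{2h+2} by ω(z) = ψ(z)·e_0 + Σ_{i=1}^h α_i(z)·e_i + Σ_{i=1}^h z_i·f_i + f_0. Then ⟨ω(z), (∂ω/∂z_j)(z)⟩ = 0 for every z ∈ Ω and every j ∈ {1,…,h} if and only if there exists a holomorphic function φ : Ω → ℂ such that α_i(z) = (1/2)·(∂φ/∂z_i)(z) for all i and ψ(z) = φ(z) − (1/2)·Σ_{i=1}^h z_i·(∂φ/∂z_i)(z) for all z ∈ Ω. -/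
/-!
The potential is explicit: `φ = ψ + Σᵢ zᵢ αᵢ`. Differentiating `ω` gives
`⟨ω, ∂ω/∂z_j⟩ = 2 α_j − ∂φ/∂z_j`, so transversality says exactly `α_j = ½ ∂φ/∂z_j`, and then
`ψ = φ − Σᵢ zᵢ αᵢ` is the stated formula for `ψ`. Conversely, the two formulas force
`ψ + Σᵢ zᵢ αᵢ = φ` on the open set `Ω`, so the two functions have the same derivatives there.
-/

/-- The symplectic form on `ℂ^{2h+2}`, where a vector is recorded as the pair of its
`e_0, e_1, …, e_h`-coordinates and its `f_0, f_1, …, f_h`-coordinates: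
`⟨e_i, e_j⟩ = ⟨f_i, f_j⟩ = 0` and `⟨e_i, f_j⟩ = δ_{ij}`. -/
noncomputable def symp {h : ℕ} (x y : (Fin (h+1) → ℂ) × (Fin (h+1) → ℂ)) : ℂ :=
  ∑ j, (x.1 j * y.2 j - x.2 j * y.1 j)

/-- `ω(z) = ψ(z)·e_0 + Σᵢ α_i(z)·e_i + Σᵢ z_i·f_i + f_0`. -/
noncomputable def omg {h : ℕ} (ψ : (Fin h → ℂ) → ℂ) (α : Fin h → (Fin h → ℂ) → ℂ)
    (z : Fin h → ℂ) : (Fin (h+1) → ℂ) × (Fin (h+1) → ℂ) :=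
  (Fin.cons (ψ z) (fun i => α i z), Fin.cons 1 z)

open ContinuousLinearMap

section CoordinateSum

variable {𝕜 ι : Type*} [NontriviallyNormedField 𝕜] [Fintype ι]
  {β : ι → (ι → 𝕜) → 𝕜} {z : ι → 𝕜}

theorem hasFDerivAt_sum_coord_mul (hβ : ∀ i, DifferentiableAt 𝕜 (β i) z) :
    HasFDerivAt (fun z => ∑ i, z i * β i z)
      (∑ i, (z i • fderiv 𝕜 (β i) z + β i z • proj i)) z :=
  HasFDerivAt.fun_sum fun i _ => (hasFDerivAt_apply i z).mul (hβ i).hasFDerivAt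

theorem fderiv_sum_coord_mul_apply_single [DecidableEq ι]
    (hβ : ∀ i, DifferentiableAt 𝕜 (β i) z) (j : ι) :
    fderiv 𝕜 (fun z => ∑ i, z i * β i z) z (Pi.single j 1) =
      β j z + ∑ i, z i * fderiv 𝕜 (β i) z (Pi.single j 1) := by
  simp [(hasFDerivAt_sum_coord_mul hβ).fderiv, sum_apply, Pi.single_apply, Finset.sum_add_distrib,
    add_comm]

end CoordinateSum

section Transversality

variable {h : ℕ} {ψ : (Fin h → ℂ) → ℂ} {α : Fin h → (Fin h → ℂ) → ℂ} {z : Fin h → ℂ}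

noncomputable def potential (ψ : (Fin h → ℂ) → ℂ) (α : Fin h → (Fin h → ℂ) → ℂ)
    (z : Fin h → ℂ) : ℂ :=
  ψ z + ∑ i, z i * α i z

theorem differentiableAt_potential (hψ : DifferentiableAt ℂ ψ z)
    (hα : ∀ i, DifferentiableAt ℂ (α i) z) : DifferentiableAt ℂ (potential ψ α) z :=
  hψ.add (hasFDerivAt_sum_coord_mul hα).differentiableAt

theorem fderiv_potential_apply_single (hψ : DifferentiableAt ℂ ψ z)
    (hα : ∀ i, DifferentiableAt ℂ (α i) z) (j : Fin h) :
    fderiv ℂ (potential ψ α) z (Pi.single j 1) =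
      fderiv ℂ ψ z (Pi.single j 1) + α j z + ∑ i, z i * fderiv ℂ (α i) z (Pi.single j 1) := by
  unfold potential
  rw [fderiv_fun_add hψ (hasFDerivAt_sum_coord_mul hα).differentiableAt, add_apply,
    fderiv_sum_coord_mul_apply_single hα, add_assoc]

theorem potential_eq_iff {d : Fin h → ℂ} {c : ℂ} (hα : ∀ i, α i z = 1 / 2 * d i) :
    potential ψ α z = c ↔ ψ z = c - 1 / 2 * ∑ i, z i * d i := by
  have hsum : ∑ i, z i * α i z = 1 / 2 * ∑ i, z i * d i := by
    simp only [hα, Finset.mul_sum, mul_left_comm]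
  rw [potential, hsum]
  constructor <;> intro H <;> linear_combination H

theorem hasFDerivAt_omg (hψ : DifferentiableAt ℂ ψ z) (hα : ∀ i, DifferentiableAt ℂ (α i) z) :
    HasFDerivAt (omg ψ α)
      (((fderiv ℂ ψ z).finCons (pi fun i => fderiv ℂ (α i) z)).prod
        ((0 : (Fin h → ℂ) →L[ℂ] ℂ).finCons (.id ℂ _))) z :=
  (hψ.hasFDerivAt.finCons (hasFDerivAt_pi.2 fun i => (hα i).hasFDerivAt)).prodMk
    ((hasFDerivAt_const 1 z).finCons (hasFDerivAt_id z))

theorem symp_omg_fderiv (hψ : DifferentiableAt ℂ ψ z) (hα : ∀ i, DifferentiableAt ℂ (α i) z)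
    (j : Fin h) :
    symp (omg ψ α z) (fderiv ℂ (omg ψ α) z (Pi.single j 1)) =
      2 * α j z - fderiv ℂ (potential ψ α) z (Pi.single j 1) := by
  rw [(hasFDerivAt_omg hψ hα).fderiv]
  simp only [symp, omg, ContinuousLinearMap.prod_apply, comp_apply, coe_pi',
    ContinuousLinearEquiv.coe_coe, zero_apply, id_apply, Fin.consEquivL_apply,
    Finset.sum_sub_distrib, Fin.sum_univ_succ, Fin.cons_zero, mul_zero, Fin.cons_succ,
    Pi.single_apply, mul_ite, mul_one, Finset.sum_ite_eq', Finset.mem_univ, if_true, zero_add,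
    one_mul, fderiv_potential_apply_single hψ hα]
  ring

end Transversality

theorem stmt0_general {h : ℕ} (Ω : Set (Fin h → ℂ)) (hΩ : IsOpen Ω)
    (ψ : (Fin h → ℂ) → ℂ) (α : Fin h → (Fin h → ℂ) → ℂ)
    (hψ : DifferentiableOn ℂ ψ Ω) (hα : ∀ i, DifferentiableOn ℂ (α i) Ω) :
    (∀ z ∈ Ω, ∀ j : Fin h,
        symp (omg ψ α z) (fderiv ℂ (omg ψ α) z (Pi.single j 1)) = 0) ↔
      ∃ φ : (Fin h → ℂ) → ℂ, DifferentiableOn ℂ φ Ω ∧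
        (∀ i, ∀ z ∈ Ω, α i z = (1 / 2) * fderiv ℂ φ z (Pi.single i 1)) ∧
        (∀ z ∈ Ω,
          ψ z = φ z - (1 / 2) * ∑ i, z i * fderiv ℂ φ z (Pi.single i 1)) := by
  have hψz : ∀ z ∈ Ω, DifferentiableAt ℂ ψ z := fun z hz =>
    hψ.differentiableAt (hΩ.mem_nhds hz)
  have hαz : ∀ z ∈ Ω, ∀ i, DifferentiableAt ℂ (α i) z := fun z hz i =>
    (hα i).differentiableAt (hΩ.mem_nhds hz)
  constructor
  · intro H
    have hαφ : ∀ i, ∀ z ∈ Ω, α i z = 1 / 2 * fderiv ℂ (potential ψ α) z (Pi.single i 1) := by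
      intro i z hz
      have htr := H z hz i
      rw [symp_omg_fderiv (hψz z hz) (hαz z hz)] at htr
      linear_combination htr / 2
    refine ⟨potential ψ α, fun z hz => ?_, hαφ, fun z hz => (potential_eq_iff (hαφ · z hz)).1 rfl⟩
    exact (differentiableAt_potential (hψz z hz) (hαz z hz)).differentiableWithinAt
  · rintro ⟨φ, -, hαφ, hψφ⟩ z hz j
    have hpot : potential ψ α =ᶠ[nhds z] φ :=
      Filter.eventually_of_mem (hΩ.mem_nhds hz) fun w hw =>
        (potential_eq_iff (hαφ · w hw)).2 (hψφ w hw)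
    rw [symp_omg_fderiv (hψz z hz) (hαz z hz), hpot.fderiv_eq, hαφ j z hz]
    ring

/-- Griffiths transversality `⟨ω, ∂ω/∂z_j⟩ = 0` holds on a convex open set `Ω` if and
only if there is a holomorphic potential `φ` with `α_i = ½ ∂φ/∂z_i` and
`ψ = φ − ½ Σᵢ z_i ∂φ/∂z_i`. -/
theorem stmt0 {h : ℕ} (hh : 1 ≤ h) (Ω : Set (Fin h → ℂ)) (hΩ : IsOpen Ω)
    (hconv : Convex ℝ Ω)
    (ψ : (Fin h → ℂ) → ℂ) (α : Fin h → (Fin h → ℂ) → ℂ)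
    (hψ : DifferentiableOn ℂ ψ Ω) (hα : ∀ i, DifferentiableOn ℂ (α i) Ω) :
    (∀ z ∈ Ω, ∀ j : Fin h,
        symp (omg ψ α z) (fderiv ℂ (omg ψ α) z (Pi.single j 1)) = 0) ↔
      ∃ φ : (Fin h → ℂ) → ℂ, DifferentiableOn ℂ φ Ω ∧
        (∀ i, ∀ z ∈ Ω, α i z = (1 / 2) * fderiv ℂ φ z (Pi.single i 1)) ∧
        (∀ z ∈ Ω,
          ψ z = φ z - (1 / 2) * ∑ i, z i * fderiv ℂ φ z (Pi.single i 1)) :=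
  stmt0_general Ω hΩ ψ α hψ hα
end

section
/- Let V be a finite-dimensional complex vector space equipped with: a nondegenerate ℂ-bilinear alternating form ⟨·,·⟩; an antilinear involution σ : V → V with ⟨σx, σy⟩ = conj(⟨x,y⟩) for all x, y; and a direct sum decomposition V = V^{3,0} ⊕ V^{2,1} ⊕ V^{1,2} ⊕ V^{0,3} such that σ(V^{p,q}) = V^{q,p} for all p+q = 3, such that ⟨V^{p,q}, V^{p',q'}⟩ = 0 unless p + p' = 3, and such that dim V^{3,0} = 1. Let ω be a generator of V^{3,0}, and let α, β ∈ V satisfy σ(α) = α, σ(β) = β and ⟨α, β⟩ ≠ 0. Then the following are equivalent: (ii) ⟨α, ω⟩ = ⟨β, ω⟩ = 0 and for all u, v ∈ V^{2,1} one has ⟨α,u⟩·⟨β,v⟩ − ⟨α,v⟩·⟨β,u⟩ = 0; (iii) ⟨α, ω⟩ = ⟨β, ω⟩ = 0 and V^{2,1} ∩ (ℂ·α + ℂ·β) ≠ {0}. -/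
/-- Criterion for a pair of real vectors to span a sub-Hodge structure: equivalence of
conditions (ii) and (iii). Here `V` carries a nondegenerate alternating form `B`, a
compatible real structure `σ`, and a weight-three Hodge decomposition
`V = W 0 ⊕ W 1 ⊕ W 2 ⊕ W 3` with `W i = V^{3−i,i}` of Calabi–Yau type
(`dim V^{3,0} = 1`), `σ(V^{p,q}) = V^{q,p}`, and `⟨V^{p,q}, V^{p',q'}⟩ = 0` unless
`p + p' = 3`. Given real vectors `α, β` with `⟨α, β⟩ ≠ 0`:
(ii) `⟨α,ω⟩ = ⟨β,ω⟩ = 0` and `α∧β ⟂ ⋀²V^{2,1}` if and only if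
(iii) `⟨α,ω⟩ = ⟨β,ω⟩ = 0` and `V^{2,1} ∩ (ℂα + ℂβ) ≠ 0`. -/
theorem stmt3 (V : Type*) [AddCommGroup V] [Module ℂ V] [FiniteDimensional ℂ V]
    (B : V →ₗ[ℂ] V →ₗ[ℂ] ℂ)
    (halt : ∀ x, B x x = 0)
    (hnd : ∀ x, (∀ y, B x y = 0) → x = 0)
    (σ : V → V)
    (hσadd : ∀ x y, σ (x + y) = σ x + σ y)
    (hσsmul : ∀ (c : ℂ) (x : V), σ (c • x) = starRingEnd ℂ c • σ x)
    (hσinv : ∀ x, σ (σ x) = x)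
    (hσB : ∀ x y, B (σ x) (σ y) = starRingEnd ℂ (B x y))
    (W : Fin 4 → Submodule ℂ V)
    (hdirect : DirectSum.IsInternal W)
    (hσW : ∀ i : Fin 4, σ '' (W i : Set V) = ↑(W (3 - i)))
    (hpair : ∀ i j : Fin 4, (i : ℕ) + (j : ℕ) ≠ 3 →
      ∀ x ∈ W i, ∀ y ∈ W j, B x y = 0)
    (hdim : Module.finrank ℂ ↥(W 0) = 1)
    (ω : V) (hω : ω ∈ W 0) (hω0 : ω ≠ 0)
    (α β : V) (hα : σ α = α) (hβ : σ β = β) (hαβ : B α β ≠ 0) :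
    (B α ω = 0 ∧ B β ω = 0 ∧
        ∀ u ∈ W 1, ∀ v ∈ W 1, B α u * B β v - B α v * B β u = 0) ↔
      (B α ω = 0 ∧ B β ω = 0 ∧
        ∃ x ∈ W 1 ⊓ Submodule.span ℂ {α, β}, x ≠ 0) := by
  -- basic facts about σ
  have hσ0 : σ 0 = 0 := by simpa using hσsmul 0 0
  have hσinj : ∀ x y, σ x = σ y → x = y := fun x y h => by
    rw [← hσinv x, h, hσinv]
  -- W 0 is spanned by ω
  have hW0span : W 0 = Submodule.span ℂ {ω} := by
    have h1 : Submodule.span ℂ {ω} ≤ W 0 := Submodule.span_le.mpr (by simp [hω])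
    refine (Submodule.eq_of_le_of_finrank_le h1 ?_).symm
    rw [hdim, finrank_span_singleton hω0]
  -- nondegeneracy via components
  have hker : ∀ x : V, (∀ i : Fin 4, ∀ y ∈ W i, B x y = 0) → x = 0 := by
    intro x hx
    apply hnd
    intro y
    have hle : (⊤ : Submodule ℂ V) ≤ LinearMap.ker (B x) := by
      rw [← hdirect.submodule_iSup_eq_top]
      exact iSup_le fun i z hz => LinearMap.mem_ker.mpr (hx i z hz)
    exact LinearMap.mem_ker.mp (hle trivial)
  -- Lemma A: W 3 pairs faithfully with ω
  have hA : ∀ x ∈ W 3, B x ω = 0 → x = 0 := by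
    intro x hx hxω
    refine hker x fun i y hy => ?_
    fin_cases i
    · have hy0 : y ∈ Submodule.span ℂ {ω} := by rw [← hW0span]; exact hy
      obtain ⟨c, rfl⟩ := Submodule.mem_span_singleton.mp hy0
      simp [hxω]
    · exact hpair 3 1 (by decide) x hx y hy
    · exact hpair 3 2 (by decide) x hx y hy
    · exact hpair 3 3 (by decide) x hx y hy
  -- Lemma B: W 2 pairs faithfully with W 1
  have hB2 : ∀ x ∈ W 2, (∀ u ∈ W 1, B x u = 0) → x = 0 := by
    intro x hx hxu
    refine hker x fun i y hy => ?_
    fin_cases i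
    · exact hpair 2 0 (by decide) x hx y hy
    · exact hxu y hy
    · exact hpair 2 2 (by decide) x hx y hy
    · exact hpair 2 3 (by decide) x hx y hy
  -- existence of decompositions
  have hdecomp : ∀ v : V, ∃ a0 ∈ W 0, ∃ a1 ∈ W 1, ∃ a2 ∈ W 2, ∃ a3 ∈ W 3,
      v = a0 + a1 + a2 + a3 := by
    intro v
    have hv : v ∈ W 0 ⊔ (W 1 ⊔ (W 2 ⊔ W 3)) := by
      have hle : (⊤ : Submodule ℂ V) ≤ W 0 ⊔ (W 1 ⊔ (W 2 ⊔ W 3)) := by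
        rw [← hdirect.submodule_iSup_eq_top]
        refine iSup_le fun i => ?_
        fin_cases i
        · exact le_sup_left
        · exact le_sup_of_le_right le_sup_left
        · exact le_sup_of_le_right (le_sup_of_le_right le_sup_left)
        · exact le_sup_of_le_right (le_sup_of_le_right le_sup_right)
      exact hle trivial
    obtain ⟨a0, h0, y, hy, rfl⟩ := Submodule.mem_sup.mp hv
    obtain ⟨a1, h1, z, hz, rfl⟩ := Submodule.mem_sup.mp hy
    obtain ⟨a2, h2, a3, h3, rfl⟩ := Submodule.mem_sup.mp hz
    exact ⟨a0, h0, a1, h1, a2, h2, a3, h3, by abel⟩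
  -- uniqueness of decompositions
  have hzero : ∀ (i : Fin 4) (x : V), x ∈ W i → x ∈ (⨆ j, ⨆ _ : j ≠ i, W j) → x = 0 :=
    fun i x hx hx' =>
      Submodule.disjoint_def.mp (hdirect.submodule_iSupIndep i) x hx hx'
  have hle' : ∀ (i j : Fin 4), j ≠ i → W j ≤ ⨆ k, ⨆ _ : k ≠ i, W k := by
    intro i j hj
    exact le_iSup₂ (f := fun k (_ : k ≠ i) => W k) j hj
  have huniq : ∀ c0 c1 c2 c3 : V, c0 ∈ W 0 → c1 ∈ W 1 → c2 ∈ W 2 → c3 ∈ W 3 →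
      c0 + c1 + c2 + c3 = 0 → c0 = 0 ∧ c1 = 0 ∧ c2 = 0 ∧ c3 = 0 := by
    intro c0 c1 c2 c3 h0 h1 h2 h3 hsum
    have e0 : c0 = 0 := by
      refine hzero 0 c0 h0 ?_
      have h : c0 = -(c1 + c2 + c3) := by
        rw [eq_neg_iff_add_eq_zero, ← hsum]; abel
      rw [h]
      exact neg_mem (add_mem (add_mem (hle' 0 1 (by decide) h1)
        (hle' 0 2 (by decide) h2)) (hle' 0 3 (by decide) h3))
    subst e0
    have e1 : c1 = 0 := by
      refine hzero 1 c1 h1 ?_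
      have h : c1 = -(c2 + c3) := by
        rw [eq_neg_iff_add_eq_zero, ← hsum]; abel
      rw [h]
      exact neg_mem (add_mem (hle' 1 2 (by decide) h2) (hle' 1 3 (by decide) h3))
    subst e1
    have e2 : c2 = 0 := by
      refine hzero 2 c2 h2 ?_
      have h : c2 = -c3 := by
        rw [eq_neg_iff_add_eq_zero, ← hsum]; abel
      rw [h]
      exact neg_mem (hle' 2 3 (by decide) h3)
    subst e2
    refine ⟨rfl, rfl, rfl, by rw [← hsum]; abel⟩
  -- σ maps W i into W (3 - i), concretely:
  have hσ12 : ∀ x ∈ W 1, σ x ∈ W 2 := by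
    intro x hx
    have : σ x ∈ (W ((3 : Fin 4) - 1) : Set V) := by
      rw [← hσW 1]; exact Set.mem_image_of_mem σ hx
    simpa using this
  have hσ03 : ∀ x ∈ W 0, σ x ∈ W 3 := by
    intro x hx
    have : σ x ∈ (W ((3 : Fin 4) - 0) : Set V) := by
      rw [← hσW 0]; exact Set.mem_image_of_mem σ hx
    simpa using this
  have hσ21 : ∀ x ∈ W 2, σ x ∈ W 1 := by
    intro x hx
    have : σ x ∈ (W ((3 : Fin 4) - 2) : Set V) := by
      rw [← hσW 2]; exact Set.mem_image_of_mem σ hx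
    simpa using this
  -- a real vector orthogonal to ω decomposes as v1 + σ v1 with v1 ∈ W 1
  have hreal : ∀ v : V, σ v = v → B v ω = 0 → ∃ v1 ∈ W 1, v = v1 + σ v1 := by
    intro v hv hvω
    obtain ⟨a0, h0, a1, h1, a2, h2, a3, h3, rfl⟩ := hdecomp v
    -- the W 3 component pairs to zero with ω
    have ha3 : a3 = 0 := by
      apply hA a3 h3
      have : B (a0 + a1 + a2 + a3) ω =
          B a0 ω + B a1 ω + B a2 ω + B a3 ω := by simp
      rw [this] at hvω
      rw [hpair 0 0 (by decide) a0 h0 ω hω, hpair 1 0 (by decide) a1 h1 ω hω,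
        hpair 2 0 (by decide) a2 h2 ω hω] at hvω
      simpa using hvω
    subst ha3
    -- compare components of v and σ v
    have hσv : σ (a0 + a1 + a2 + 0) = σ a0 + σ a1 + σ a2 := by
      rw [hσadd, hσadd, hσadd, hσ0, add_zero]
    have hkey : (a0 - 0) + (a1 - σ a2) + (a2 - σ a1) + (0 - σ a0) = 0 := by
      have h' : a0 + a1 + a2 + 0 = σ a0 + σ a1 + σ a2 := by rw [← hv, hσv]
      have h'' : (a0 + a1 + a2 + 0) - (σ a0 + σ a1 + σ a2) = 0 := by
        rw [h']; abel
      calc (a0 - 0) + (a1 - σ a2) + (a2 - σ a1) + (0 - σ a0)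
          = (a0 + a1 + a2 + 0) - (σ a0 + σ a1 + σ a2) := by abel
        _ = 0 := h''
    obtain ⟨e0, e1, e2, e3⟩ := huniq _ _ _ _
      (sub_mem h0 (zero_mem _))
      (sub_mem h1 (hσ21 a2 h2))
      (sub_mem h2 (hσ12 a1 h1))
      (sub_mem (zero_mem _) (hσ03 a0 h0)) hkey
    have ha0 : a0 = 0 := by simpa using e0
    have ha2 : a2 = σ a1 := by
      have := sub_eq_zero.mp e2; exact this
    subst ha0 ha2
    exact ⟨a1, h1, by abel⟩
  -- split the iff; both sides share the first two conditions
  constructor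
  · rintro ⟨h1, h2, hdet⟩
    refine ⟨h1, h2, ?_⟩
    obtain ⟨a, ha, hαd⟩ := hreal α hα h1
    obtain ⟨b, hb, hβd⟩ := hreal β hβ h2
    -- B α u = B (σ a) u on W 1
    have hBα : ∀ u ∈ W 1, B α u = B (σ a) u := by
      intro u hu
      rw [hαd]
      simp [hpair 1 1 (by decide) a ha u hu]
    have hBβ : ∀ u ∈ W 1, B β u = B (σ b) u := by
      intro u hu
      rw [hβd]
      simp [hpair 1 1 (by decide) b hb u hu]
    -- the functional B α on W 1 is nonzero
    have hex : ∃ u0 ∈ W 1, B α u0 ≠ 0 := by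
      by_contra h
      push_neg at h
      have hσa : σ a = 0 := by
        apply hB2 (σ a) (hσ12 a ha)
        intro u hu
        rw [← hBα u hu]
        exact h u hu
      have haz : a = 0 := by
        rw [← hσinv a, hσa, hσ0]
      have : α = 0 := by rw [hαd, haz, hσ0, add_zero]
      rw [this] at hαβ
      simp at hαβ
    obtain ⟨u0, hu0, hfu0⟩ := hex
    set c : ℂ := B β u0 / B α u0 with hc
    have hprop : ∀ u ∈ W 1, B β u = c * B α u := by
      intro u hu
      have hd := hdet u0 hu0 u hu
      rw [hc, div_mul_eq_mul_div, eq_div_iff hfu0]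
      linear_combination hd
    -- x := β - c • α works
    refine ⟨β - c • α, ⟨?_, ?_⟩, ?_⟩
    · -- β - c • α ∈ W 1
      have hsplit : β - c • α = (b - c • a) + (σ b - c • σ a) := by
        rw [hβd, hαd]; module
      have hW2 : σ b - c • σ a = 0 := by
        apply hB2 _ (sub_mem (hσ12 b hb) (Submodule.smul_mem _ _ (hσ12 a ha)))
        intro u hu
        have hbx : B (β - c • α) u = 0 := by
          simp only [map_sub, map_smul, LinearMap.sub_apply, LinearMap.smul_apply,
            smul_eq_mul]
          rw [hprop u hu]; ring
        have h11 : B (b - c • a) u = 0 :=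
          hpair 1 1 (by decide) _ (sub_mem hb (Submodule.smul_mem _ _ ha)) u hu
        rw [hsplit, map_add, LinearMap.add_apply, h11, zero_add] at hbx
        exact hbx
      rw [hsplit, hW2, add_zero]
      exact sub_mem hb (Submodule.smul_mem _ _ ha)
    · exact Submodule.sub_mem _ (Submodule.subset_span (by simp))
        (Submodule.smul_mem _ _ (Submodule.subset_span (by simp)))
    · intro h
      apply hαβ
      have : β = c • α := by rwa [sub_eq_zero] at h
      rw [this]
      simp [halt α]
  · rintro ⟨h1, h2, x, ⟨hxW, hxs⟩, hx0⟩
    refine ⟨h1, h2, ?_⟩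
    obtain ⟨a, ha, hαd⟩ := hreal α hα h1
    obtain ⟨b, hb, hβd⟩ := hreal β hβ h2
    obtain ⟨p, q, hpq⟩ := Submodule.mem_span_pair.mp hxs
    -- extract the W 2 component
    have hkey : (0 : V) + ((p • a + q • b) - x) + (p • σ a + q • σ b) + 0 = 0 := by
      have hx' : p • α + q • β = (p • a + q • b) + (p • σ a + q • σ b) := by
        rw [hαd, hβd]; module
      rw [← hpq] at *
      calc (0 : V) + ((p • a + q • b) - (p • α + q • β)) + (p • σ a + q • σ b) + 0
          = ((p • a + q • b) + (p • σ a + q • σ b)) - (p • α + q • β) := by abel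
        _ = 0 := by rw [← hx']; abel
    obtain ⟨-, e1, e2, -⟩ := huniq _ _ _ _ (zero_mem _)
      (sub_mem (add_mem (Submodule.smul_mem _ _ ha) (Submodule.smul_mem _ _ hb)) hxW)
      (add_mem (Submodule.smul_mem _ _ (hσ12 a ha)) (Submodule.smul_mem _ _ (hσ12 b hb)))
      (zero_mem _) hkey
    -- e2 : p • σ a + q • σ b = 0
    have hBα : ∀ u ∈ W 1, B α u = B (σ a) u := by
      intro u hu
      rw [hαd]
      simp [hpair 1 1 (by decide) a ha u hu]
    have hBβ : ∀ u ∈ W 1, B β u = B (σ b) u := by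
      intro u hu
      rw [hβd]
      simp [hpair 1 1 (by decide) b hb u hu]
    by_cases hq : q = 0
    · -- then p • σ a = 0 and p ≠ 0, so α = 0: contradiction
      exfalso
      subst hq
      have hp : p ≠ 0 := by
        intro hp
        apply hx0
        rw [← hpq, hp]; simp
      have hσa : σ a = 0 := by
        have : p • σ a = 0 := by simpa using e2
        exact (smul_eq_zero.mp this).resolve_left hp
      have haz : a = 0 := by rw [← hσinv a, hσa, hσ0]
      apply hαβ
      rw [hαd, hσa, haz]
      simp
    · -- σ b = (-(p/q)) • σ a
      have hσb : σ b = (-(p / q)) • σ a := by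
        have h' : q • σ b = -(p • σ a) := by
          rw [eq_neg_iff_add_eq_zero, ← e2]; abel
        have h2' : σ b = q⁻¹ • (q • σ b) := by
          rw [smul_smul, inv_mul_cancel₀ hq, one_smul]
        rw [h2', h', smul_neg, smul_smul, ← neg_smul]
        congr 1
        field_simp
      intro u hu v hv
      rw [hBα u hu, hBα v hv, hBβ u hu, hBβ v hv, hσb]
      simp only [map_smul, LinearMap.smul_apply, smul_eq_mul]
      ring
end

section
/- Let c ∈ ℚ with c ≠ 0, and for z ∈ ℂ set ω(z) = −c·z³·e_0 + 3c·z²·e_1 + z·f_1 + f_0 ∈ ℂ⁴. Let z ∈ ℂ with Im z ≠ 0. Then the following are equivalent: (a) there exist ℚ-linearly independent vectors α, β ∈ ℚ⁴ (i.e., with all coordinates rational in the basis e_0, e_1, f_1, f_0) such that ⟨α, ω(z)⟩ = ⟨β, ω(z)⟩ = 0 and ⟨α, β⟩ ≠ 0; (b) z is algebraic over ℚ of degree exactly 2, i.e., [ℚ(z) : ℚ] = 2. -/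
/-- The symplectic form on `ℂ⁴` with basis `e_0, e_1, f_1, f_0` (coordinates `0,1,2,3`):
`⟨e_0, f_0⟩ = ⟨e_1, f_1⟩ = 1`, all other pairings among basis vectors zero. -/
noncomputable def symp4 (x y : Fin 4 → ℂ) : ℂ :=
  x 0 * y 3 - x 3 * y 0 + x 1 * y 2 - x 2 * y 1

/-- `ω(z) = −c·z³·e_0 + 3c·z²·e_1 + z·f_1 + f_0`. -/
noncomputable def om4 (c : ℚ) (z : ℂ) : Fin 4 → ℂ :=
  ![-(c : ℂ) * z ^ 3, 3 * (c : ℂ) * z ^ 2, z, 1]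

open Polynomial

/-- Auxiliary: the cubic polynomial attached to a rational vector `α`. -/
noncomputable def pol4 (c : ℚ) (α : Fin 4 → ℚ) : Polynomial ℚ :=
  C (c * α 3) * X ^ 3 + C (-(3 * c) * α 2) * X ^ 2 + C (α 1) * X + C (α 0)

lemma pol4_coeff0 (c : ℚ) (α : Fin 4 → ℚ) : (pol4 c α).coeff 0 = α 0 := by
  simp only [pol4, coeff_add, coeff_C_mul, coeff_X_pow, coeff_C, coeff_X]
  norm_num

lemma pol4_coeff1 (c : ℚ) (α : Fin 4 → ℚ) : (pol4 c α).coeff 1 = α 1 := by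
  simp only [pol4, coeff_add, coeff_C_mul, coeff_X_pow, coeff_C, coeff_X]
  norm_num

lemma pol4_coeff2 (c : ℚ) (α : Fin 4 → ℚ) : (pol4 c α).coeff 2 = -(3 * c) * α 2 := by
  simp only [pol4, coeff_add, coeff_C_mul, coeff_X_pow, coeff_C, coeff_X]
  norm_num

lemma pol4_coeff3 (c : ℚ) (α : Fin 4 → ℚ) : (pol4 c α).coeff 3 = c * α 3 := by
  simp only [pol4, coeff_add, coeff_C_mul, coeff_X_pow, coeff_C, coeff_X]
  norm_num

lemma pol4_natDegree_le (c : ℚ) (α : Fin 4 → ℚ) : (pol4 c α).natDegree ≤ 3 := by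
  unfold pol4
  compute_degree

lemma pol4_ne_zero (c : ℚ) (hc : c ≠ 0) {α : Fin 4 → ℚ} (hα : α ≠ 0) : pol4 c α ≠ 0 := by
  intro h
  apply hα
  have h0 := pol4_coeff0 c α
  have h1 := pol4_coeff1 c α
  have h2 := pol4_coeff2 c α
  have h3 := pol4_coeff3 c α
  rw [h] at h0 h1 h2 h3
  simp only [coeff_zero] at h0 h1 h2 h3
  have h3c : -(3 * c) ≠ 0 := by simp [hc]
  funext i
  fin_cases i
  · exact h0.symm
  · exact h1.symm
  · exact (mul_eq_zero.1 h2.symm).resolve_left h3c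
  · exact (mul_eq_zero.1 h3.symm).resolve_left hc

lemma aeval_pol4 (c : ℚ) (α : Fin 4 → ℚ) (z : ℂ) :
    (Polynomial.aeval z (pol4 c α)) = symp4 (fun i => (α i : ℂ)) (om4 c z) := by
  rw [show symp4 (fun i => ((α i : ℚ) : ℂ)) (om4 c z)
      = (α 0 : ℂ) * 1 - (α 3 : ℂ) * (-(c : ℂ) * z ^ 3) + (α 1 : ℂ) * z
        - (α 2 : ℂ) * (3 * (c : ℂ) * z ^ 2) from rfl]
  simp only [pol4, map_add, map_mul, map_pow, aeval_C, aeval_X, eq_ratCast]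
  push_cast
  ring

/-- For the family `ω(z) = −cz³e_0 + 3cz²e_1 + zf_1 + f_0` (`c ∈ ℚ`, `c ≠ 0`) and a
non-real `z`, there exist `ℚ`-linearly independent rational vectors `α, β` with
`⟨α, ω(z)⟩ = ⟨β, ω(z)⟩ = 0` and `⟨α, β⟩ ≠ 0` if and only if `z` is algebraic of
degree exactly `2` over `ℚ`, i.e. `[ℚ(z) : ℚ] = 2`. -/
theorem stmt4 (c : ℚ) (hc : c ≠ 0) (z : ℂ) (hz : z.im ≠ 0) :
    (∃ α β : Fin 4 → ℚ, LinearIndependent ℚ ![α, β] ∧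
        symp4 (fun i => (α i : ℂ)) (om4 c z) = 0 ∧
        symp4 (fun i => (β i : ℂ)) (om4 c z) = 0 ∧
        symp4 (fun i => (α i : ℂ)) (fun i => (β i : ℂ)) ≠ 0) ↔
      Module.finrank ℚ ↥(IntermediateField.adjoin ℚ {z}) = 2 := by
  constructor
  · rintro ⟨α, β, hli, hα, hβ, hsymp⟩
    have hαz : Polynomial.aeval z (pol4 c α) = 0 := by rw [aeval_pol4]; exact hα
    have hβz : Polynomial.aeval z (pol4 c β) = 0 := by rw [aeval_pol4]; exact hβ
    have hα0 : α ≠ 0 := by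
      have := hli.ne_zero 0
      simpa using this
    have hβ0 : β ≠ 0 := by
      have := hli.ne_zero 1
      simpa using this
    have hpα : pol4 c α ≠ 0 := pol4_ne_zero c hc hα0
    have hpβ : pol4 c β ≠ 0 := pol4_ne_zero c hc hβ0
    have halg : IsIntegral ℚ z := (IsAlgebraic.isIntegral ⟨pol4 c α, hpα, hαz⟩)
    have hmne : minpoly ℚ z ≠ 0 := minpoly.ne_zero halg
    have hd3 : (minpoly ℚ z).natDegree ≤ 3 :=
      le_trans (Polynomial.natDegree_le_of_dvd (minpoly.dvd ℚ z hαz) hpα) (pol4_natDegree_le c α)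
    have hd1 : 0 < (minpoly ℚ z).natDegree := minpoly.natDegree_pos halg
    have hne1 : (minpoly ℚ z).natDegree ≠ 1 := by
      intro h1
      have hdeg : (minpoly ℚ z).degree = 1 :=
        (Polynomial.degree_eq_iff_natDegree_eq hmne).2 h1
      obtain ⟨q, hq⟩ := (minpoly.degree_eq_one_iff).1 hdeg
      apply hz
      rw [← hq]
      simp
    have hne3 : (minpoly ℚ z).natDegree ≠ 3 := by
      intro h3
      obtain ⟨qα, hqα⟩ := minpoly.dvd ℚ z hαz
      obtain ⟨qβ, hqβ⟩ := minpoly.dvd ℚ z hβz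
      have hqαne : qα ≠ 0 := by rintro rfl; rw [mul_zero] at hqα; exact hpα hqα
      have hqβne : qβ ≠ 0 := by rintro rfl; rw [mul_zero] at hqβ; exact hpβ hqβ
      have hdegqα : qα.natDegree = 0 := by
        have h := pol4_natDegree_le c α
        rw [hqα, Polynomial.natDegree_mul hmne hqαne, h3] at h
        omega
      have hdegqβ : qβ.natDegree = 0 := by
        have h := pol4_natDegree_le c β
        rw [hqβ, Polynomial.natDegree_mul hmne hqβne, h3] at h
        omega
      obtain ⟨a, rfl⟩ := Polynomial.natDegree_eq_zero.1 hdegqα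
      obtain ⟨b, rfl⟩ := Polynomial.natDegree_eq_zero.1 hdegqβ
      have ha0 : a ≠ 0 := by rintro rfl; simp at hqαne
      have key : C b * pol4 c α = C a * pol4 c β := by
        rw [hqα, hqβ]; ring
      have hcoeff : ∀ n, b * (pol4 c α).coeff n = a * (pol4 c β).coeff n := by
        intro n
        rw [← Polynomial.coeff_C_mul, ← Polynomial.coeff_C_mul, key]
      have h3c : -(3 * c) ≠ 0 := by simp [hc]
      have hab : ∀ i, b * α i = a * β i := by
        intro i
        fin_cases i
        · have := hcoeff 0; rwa [pol4_coeff0, pol4_coeff0] at this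
        · have := hcoeff 1; rwa [pol4_coeff1, pol4_coeff1] at this
        · have h := hcoeff 2
          rw [pol4_coeff2, pol4_coeff2] at h
          have h' : -(3*c) * (b * α 2) = -(3*c) * (a * β 2) := by ring_nf; ring_nf at h; linarith
          exact mul_left_cancel₀ h3c h'
        · have h := hcoeff 3
          rw [pol4_coeff3, pol4_coeff3] at h
          have h' : c * (b * α 3) = c * (a * β 3) := by ring_nf; ring_nf at h; linarith
          exact mul_left_cancel₀ hc h'
      have := (LinearIndependent.pair_iff.1 hli b (-a) ?_)
      · exact ha0 (neg_eq_zero.1 this.2)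
      · funext i
        simp only [Pi.add_apply, Pi.smul_apply, smul_eq_mul, Pi.zero_apply]
        have := hab i
        linarith
    have : (minpoly ℚ z).natDegree = 2 := by omega
    rw [IntermediateField.adjoin.finrank halg]
    exact this
  · intro hfr
    have hfd : FiniteDimensional ℚ ↥(IntermediateField.adjoin ℚ {z}) := by
      by_contra h
      rw [Module.finrank_of_infinite_dimensional h] at hfr
      exact two_ne_zero hfr.symm
    have halg : IsIntegral ℚ z :=
      (IntermediateField.AdjoinSimple.isIntegral_gen ℚ z).1
        (IsIntegral.of_finite ℚ (IntermediateField.AdjoinSimple.gen ℚ z))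
    have hdeg : (minpoly ℚ z).natDegree = 2 := by
      rw [← IntermediateField.adjoin.finrank halg]; exact hfr
    set m := minpoly ℚ z with hm
    set p1 := m.coeff 1 with hp1
    set p0 := m.coeff 0 with hp0
    have hmon : m.Monic := minpoly.monic halg
    have hmexp : m = X ^ 2 + C p1 * X + C p0 := by
      ext n
      match n with
      | 0 => simp [hp0]
      | 1 => simp [hp1]
      | 2 =>
        have h2 : m.coeff 2 = 1 := by
          have := hmon.coeff_natDegree
          rwa [hdeg] at this
        simp [h2, Polynomial.coeff_X_pow]
      | (n+3) =>
        rw [Polynomial.coeff_eq_zero_of_natDegree_lt (by omega : m.natDegree < n + 3)]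
        have e1 : n + 3 ≠ 2 := by omega
        have e2 : n + 3 ≠ 1 := by omega
        have e3 : n + 3 ≠ 0 := by omega
        simp [Polynomial.coeff_X_pow, Polynomial.coeff_C, Polynomial.coeff_X, e1, e2, e3]
    have hz2 : z ^ 2 + (p1 : ℂ) * z + (p0 : ℂ) = 0 := by
      have h := minpoly.aeval ℚ z
      rw [← hm, hmexp] at h
      simpa [eq_ratCast] using h
    have hdisc : p1 ^ 2 - 4 * p0 ≠ 0 := by
      intro h
      have hsq : ((2 : ℂ) * z + (p1 : ℂ)) ^ 2 = ((p1 ^ 2 - 4 * p0 : ℚ) : ℂ) := by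
        push_cast
        linear_combination 4 * hz2
      rw [h] at hsq
      push_cast at hsq
      have h2 : (2 : ℂ) * z + (p1 : ℂ) = 0 := by
        exact pow_eq_zero_iff (by norm_num) |>.1 hsq
      have hzeq : z = -(p1 : ℂ) / 2 := by linear_combination h2 / 2
      apply hz
      rw [hzeq]
      simp
    refine ⟨![3*c*p0, 3*c*p1, -1, 0], ![0, 3*c*p0, -p1, 3], ?_, ?_, ?_, ?_⟩
    · rw [LinearIndependent.pair_iff]
      intro s t hst
      have h3 : s * 0 + t * 3 = 0 := congrFun hst 3
      have h2 : s * (-1) + t * (-p1) = 0 := congrFun hst 2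
      have ht : t = 0 := by linarith
      subst ht
      have hs : s = 0 := by nlinarith [h2]
      exact ⟨hs, rfl⟩
    · rw [show symp4 (fun i => ((![3*c*p0, 3*c*p1, -1, 0] : Fin 4 → ℚ) i : ℂ)) (om4 c z)
        = ((3*c*p0 : ℚ) : ℂ) * 1 - ((0 : ℚ) : ℂ) * (-(c : ℂ) * z ^ 3)
          + ((3*c*p1 : ℚ) : ℂ) * z - ((-1 : ℚ) : ℂ) * (3 * (c : ℂ) * z ^ 2) from rfl]
      push_cast
      linear_combination (3 * (c : ℂ)) * hz2
    · rw [show symp4 (fun i => ((![0, 3*c*p0, -p1, 3] : Fin 4 → ℚ) i : ℂ)) (om4 c z)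
        = ((0 : ℚ) : ℂ) * 1 - ((3 : ℚ) : ℂ) * (-(c : ℂ) * z ^ 3)
          + ((3*c*p0 : ℚ) : ℂ) * z - ((-p1 : ℚ) : ℂ) * (3 * (c : ℂ) * z ^ 2) from rfl]
      push_cast
      linear_combination (3 * (c : ℂ) * z) * hz2
    · rw [show symp4 (fun i => ((![3*c*p0, 3*c*p1, -1, 0] : Fin 4 → ℚ) i : ℂ))
          (fun i => ((![0, 3*c*p0, -p1, 3] : Fin 4 → ℚ) i : ℂ))
        = ((3*c*p0 : ℚ) : ℂ) * ((3 : ℚ) : ℂ) - ((0 : ℚ) : ℂ) * ((0 : ℚ) : ℂ)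
          + ((3*c*p1 : ℚ) : ℂ) * ((-p1 : ℚ) : ℂ) - ((-1 : ℚ) : ℂ) * ((3*c*p0 : ℚ) : ℂ) from rfl]
      intro h
      apply hdisc
      have h' : ((3 * c * (4 * p0 - p1 ^ 2) : ℚ) : ℂ) = 0 := by
        push_cast
        push_cast at h
        linear_combination h
      have h'' : (3 * c * (4 * p0 - p1 ^ 2) : ℚ) = 0 := by exact_mod_cast h'
      have h3c : (3 * c : ℚ) ≠ 0 := by simp [hc]
      have := (mul_eq_zero.1 h'').resolve_left h3c
      linarith [sq_nonneg p1]
end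

section
/- Let φ ∈ ℂ[z_1,…,z_h] be a homogeneous polynomial of degree 3. For v ∈ ℂ^h define the ℂ-linear map T_v on ℂ^{2h+2} by: T_v f_0 = f_0 + Σ_{i=1}^h v_i f_i + Σ_{i=1}^h (∂φ/∂z_i)(v)·e_i − φ(v)·e_0; T_v f_i = f_i + Σ_{j=1}^h (∂²φ/∂z_i∂z_j)(v)·e_j − (∂φ/∂z_i)(v)·e_0 for 1 ≤ i ≤ h; T_v e_i = e_i − v_i·e_0 for 1 ≤ i ≤ h; and T_v e_0 = e_0. Then: (a) T_v is symplectic, i.e., ⟨T_v x, T_v y⟩ = ⟨x, y⟩ for all x, y ∈ ℂ^{2h+2}; (b) T_v(ω(z)) = ω(z + v) for all z ∈ ℂ^h; and (c) T_v ∘ T_w = T_{v+w} for all v, w ∈ ℂ^h. -/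
open MvPolynomial

/-- `ω(z) = −φ(z)·e_0 + Σᵢ (∂φ/∂z_i)(z)·e_i + Σᵢ z_i·f_i + f_0`. -/
noncomputable def om {h : ℕ} (φ : MvPolynomial (Fin h) ℂ) (z : Fin h → ℂ) :
    (Fin (h+1) → ℂ) × (Fin (h+1) → ℂ) :=
  (Fin.cons (-(aeval z φ)) (fun i => aeval z (pderiv i φ)), Fin.cons 1 z)

/-- The linear map `T_v` on `ℂ^{2h+2}` determined by
`T_v f_0 = f_0 + Σ v_i f_i + Σ (∂φ/∂z_i)(v) e_i − φ(v) e_0`,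
`T_v f_i = f_i + Σ_j (∂²φ/∂z_i∂z_j)(v) e_j − (∂φ/∂z_i)(v) e_0`,
`T_v e_i = e_i − v_i e_0`, `T_v e_0 = e_0`. -/
noncomputable def Tmap {h : ℕ} (φ : MvPolynomial (Fin h) ℂ) (v : Fin h → ℂ)
    (x : (Fin (h+1) → ℂ) × (Fin (h+1) → ℂ)) : (Fin (h+1) → ℂ) × (Fin (h+1) → ℂ) :=
  (Fin.cons
      (x.1 0 - x.2 0 * aeval v φ - (∑ i, x.2 i.succ * aeval v (pderiv i φ))
        - ∑ i, x.1 i.succ * v i)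
      (fun j => x.1 j.succ + x.2 0 * aeval v (pderiv j φ)
        + ∑ i, x.2 i.succ * aeval v (pderiv i (pderiv j φ))),
    Fin.cons (x.2 0) (fun i => x.2 i.succ + x.2 0 * v i))

section StmtAux

variable {h : ℕ}

lemma stmt10ev1 (a b c j : Fin h) (v : Fin h → ℂ) :
    aeval v (pderiv j (X a * X b * X c : MvPolynomial (Fin h) ℂ)) =
      (if a = j then v b * v c else 0) + (if b = j then v c * v a else 0)
        + (if c = j then v b * v a else 0) := by
  simp only [pderiv_mul, pderiv_X, Pi.single_apply, map_add, map_mul, aeval_X]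
  split_ifs <;> simp <;> ring

lemma stmt10pd1 (a b c j : Fin h) : pderiv j (X a * X b * X c : MvPolynomial (Fin h) ℂ) =
    (if a = j then X b * X c else 0) + (if b = j then X c * X a else 0)
      + (if c = j then X b * X a else 0) := by
  simp only [pderiv_mul, pderiv_X, Pi.single_apply, ite_mul, mul_ite, one_mul, mul_one,
    zero_mul, mul_zero]
  split_ifs <;> ring

lemma stmt10evq (b c i : Fin h) (v : Fin h → ℂ) :
    aeval v (pderiv i (X b * X c : MvPolynomial (Fin h) ℂ)) =
      (if b = i then v c else 0) + (if c = i then v b else 0) := by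
  simp only [pderiv_mul, pderiv_X, Pi.single_apply, ite_mul, mul_ite, one_mul, mul_one,
    zero_mul, mul_zero, map_add, aeval_X, apply_ite (aeval v), map_zero]

lemma stmt10ev2 (a b c i j : Fin h) (v : Fin h → ℂ) :
    aeval v (pderiv i (pderiv j (X a * X b * X c : MvPolynomial (Fin h) ℂ))) =
      (if a = j then (if b = i then v c else 0) + (if c = i then v b else 0) else 0)
      + (if b = j then (if c = i then v a else 0) + (if a = i then v c else 0) else 0)
      + (if c = j then (if b = i then v a else 0) + (if a = i then v b else 0) else 0) := by
  rw [stmt10pd1]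
  simp only [map_add, apply_ite (⇑(pderiv i)), map_zero, apply_ite (⇑(aeval v)), stmt10evq]

lemma stmt10sum_ev1 (a b c : Fin h) (z v : Fin h → ℂ) :
    ∑ i, z i * aeval v (pderiv i (X a * X b * X c : MvPolynomial (Fin h) ℂ)) =
      z a * (v b * v c) + z b * (v c * v a) + z c * (v b * v a) := by
  simp only [stmt10ev1, mul_add, mul_ite, mul_zero, Finset.sum_add_distrib, Finset.sum_ite_eq,
    Finset.mem_univ, if_true]

lemma stmt10sum_ite_const {α} [Fintype α] (c : Prop) [Decidable c] (f : α → ℂ) :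
    ∑ i, (if c then f i else 0) = if c then ∑ i, f i else 0 := by split_ifs <;> simp

lemma stmt10sum_ev2 (a b c j : Fin h) (z v : Fin h → ℂ) :
    ∑ i, z i * aeval v (pderiv i (pderiv j (X a * X b * X c : MvPolynomial (Fin h) ℂ))) =
      (if a = j then z b * v c + z c * v b else 0) + (if b = j then z c * v a + z a * v c else 0)
        + (if c = j then z b * v a + z a * v b else 0) := by
  simp only [stmt10ev2, mul_add, mul_ite, mul_zero, Finset.sum_add_distrib, stmt10sum_ite_const,
    Finset.sum_ite_eq, Finset.mem_univ, if_true]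

def stmt10Q {h : ℕ} (φ : MvPolynomial (Fin h) ℂ) : Prop :=
  (∀ z v : Fin h → ℂ, aeval (z+v) φ = aeval z φ + aeval v φ
      + (∑ i, z i * aeval v (pderiv i φ)) + ∑ i, v i * aeval z (pderiv i φ)) ∧
  (∀ (z v : Fin h → ℂ) (j : Fin h), aeval (z+v) (pderiv j φ) = aeval z (pderiv j φ)
      + aeval v (pderiv j φ) + ∑ i, z i * aeval v (pderiv i (pderiv j φ))) ∧
  (∀ (z v : Fin h → ℂ) (j : Fin h), ∑ i, z i * aeval v (pderiv i (pderiv j φ))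
      = ∑ i, v i * aeval z (pderiv i (pderiv j φ))) ∧
  (∀ (v : Fin h → ℂ) (i j : Fin h), aeval v (pderiv i (pderiv j φ))
      = aeval v (pderiv j (pderiv i φ))) ∧
  (∀ (v : Fin h → ℂ) (j : Fin h), ∑ i, v i * aeval v (pderiv i (pderiv j φ))
      = 2 * aeval v (pderiv j φ)) ∧
  (∀ (z v : Fin h → ℂ) (i j : Fin h), aeval (z+v) (pderiv i (pderiv j φ))
      = aeval z (pderiv i (pderiv j φ)) + aeval v (pderiv i (pderiv j φ)))

lemma stmt10Qmono (a b c : Fin h) : stmt10Q (X a * X b * X c : MvPolynomial (Fin h) ℂ) := by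
  refine ⟨fun z v => ?_, fun z v j => ?_, fun z v j => ?_, fun v i j => ?_, fun v j => ?_,
    fun z v i j => ?_⟩
  · simp only [stmt10sum_ev1, map_mul, aeval_X, Pi.add_apply]; ring
  · simp only [stmt10ev1, stmt10sum_ev2, Pi.add_apply]; split_ifs <;> ring
  · simp only [stmt10sum_ev2]; split_ifs <;> ring
  · simp only [stmt10ev2]; split_ifs <;> ring
  · simp only [stmt10sum_ev2, stmt10ev1]; split_ifs <;> ring
  · simp only [stmt10ev2, Pi.add_apply]; split_ifs <;> ring

lemma stmt10Qzero : stmt10Q (0 : MvPolynomial (Fin h) ℂ) := by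
  refine ⟨fun z v => ?_, fun z v j => ?_, fun z v j => ?_, fun v i j => ?_, fun v j => ?_,
    fun z v i j => ?_⟩ <;> simp

lemma stmt10Qadd {p q : MvPolynomial (Fin h) ℂ} (hp : stmt10Q p) (hq : stmt10Q q) :
    stmt10Q (p + q) := by
  obtain ⟨p1, p2, p3, p4, p5, p6⟩ := hp
  obtain ⟨q1, q2, q3, q4, q5, q6⟩ := hq
  refine ⟨fun z v => ?_, fun z v j => ?_, fun z v j => ?_, fun v i j => ?_, fun v j => ?_,
    fun z v i j => ?_⟩
  · simp only [map_add, mul_add, Finset.sum_add_distrib, p1 z v, q1 z v]; ring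
  · simp only [map_add, mul_add, Finset.sum_add_distrib, p2 z v j, q2 z v j]; ring
  · simp only [map_add, mul_add, Finset.sum_add_distrib, p3 z v j, q3 z v j]
  · simp only [map_add, p4 v i j, q4 v i j]
  · simp only [map_add, mul_add, Finset.sum_add_distrib, p5 v j, q5 v j]
  · simp only [map_add, p6 z v i j, q6 z v i j]; ring

lemma stmt10Qsmul {p : MvPolynomial (Fin h) ℂ} (r : ℂ) (hp : stmt10Q p) : stmt10Q (r • p) := by
  obtain ⟨p1, p2, p3, p4, p5, p6⟩ := hp
  refine ⟨fun z v => ?_, fun z v j => ?_, fun z v j => ?_, fun v i j => ?_, fun v j => ?_,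
    fun z v i j => ?_⟩
  · simp only [smul_eq_C_mul, pderiv_C_mul, map_mul, aeval_C, Algebra.algebraMap_self_apply,
      mul_left_comm, ← Finset.mul_sum, p1 z v]; ring
  · simp only [smul_eq_C_mul, pderiv_C_mul, map_mul, aeval_C, Algebra.algebraMap_self_apply,
      mul_left_comm, ← Finset.mul_sum, p2 z v j]; ring
  · simp only [smul_eq_C_mul, pderiv_C_mul, map_mul, aeval_C, Algebra.algebraMap_self_apply,
      mul_left_comm, ← Finset.mul_sum, p3 z v j]
  · simp only [smul_eq_C_mul, pderiv_C_mul, map_mul, aeval_C, Algebra.algebraMap_self_apply, p4 v i j]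
  · simp only [smul_eq_C_mul, pderiv_C_mul, map_mul, aeval_C, Algebra.algebraMap_self_apply,
      mul_left_comm, ← Finset.mul_sum, p5 v j]
  · simp only [smul_eq_C_mul, pderiv_C_mul, map_mul, aeval_C, Algebra.algebraMap_self_apply,
      p6 z v i j]; ring

lemma stmt10degree_fin (d : Fin h →₀ ℕ) : d.degree = ∑ i, d i := by
  rw [Finsupp.degree]
  exact Finset.sum_subset (Finset.subset_univ _)
    (fun i _ hi => Finsupp.notMem_support_iff.mp hi)

lemma stmt10degsplit {n : ℕ} (d : Fin h →₀ ℕ) (hd : d.degree = n + 1) :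
    ∃ (a : Fin h) (d' : Fin h →₀ ℕ), d = Finsupp.single a 1 + d' ∧ d'.degree = n := by
  have hne : d ≠ 0 := by
    intro h0; rw [h0] at hd; simp at hd
  obtain ⟨a, ha⟩ := Finsupp.support_nonempty_iff.mpr hne
  have ha' : 1 ≤ d a := Nat.one_le_iff_ne_zero.mpr (Finsupp.mem_support_iff.mp ha)
  have heq : d = Finsupp.single a 1 + (d - Finsupp.single a 1) := by
    ext i
    by_cases hia : i = a <;>
      simp [Finsupp.single_apply, Finsupp.sub_apply, hia, Ne.symm] <;> omega
  refine ⟨a, d - Finsupp.single a 1, heq, ?_⟩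
  have hpt : ∀ i, d i = (Finsupp.single a 1) i + ((d - Finsupp.single a 1 : Fin h →₀ ℕ)) i := by
    intro i; conv_lhs => rw [heq]
    simp
  rw [stmt10degree_fin] at hd
  rw [stmt10degree_fin]
  have hsum : ∑ i, d i
      = (∑ i, (Finsupp.single a 1) i) + ∑ i, ((d - Finsupp.single a 1 : Fin h →₀ ℕ)) i := by
    rw [← Finset.sum_add_distrib]; exact Finset.sum_congr rfl (fun i _ => hpt i)
  have hs : ∑ i, (Finsupp.single a 1) i = 1 := by
    simp [Finsupp.single_apply, Finset.sum_ite_eq]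
  omega

lemma stmt10monomial3 (d : Fin h →₀ ℕ) (hd : d.degree = 3) :
    ∃ a b c : Fin h, (monomial d (1:ℂ)) = X a * X b * X c := by
  obtain ⟨a, d1, rfl, h1⟩ := stmt10degsplit d hd
  obtain ⟨b, d2, rfl, h2⟩ := stmt10degsplit d1 h1
  obtain ⟨c, d3, rfl, h3⟩ := stmt10degsplit d2 h2
  have h0 : d3 = 0 := by rwa [Finsupp.degree_eq_zero_iff] at h3
  subst h0
  refine ⟨a, b, c, ?_⟩
  have hX : ∀ s : Fin h, (X s : MvPolynomial (Fin h) ℂ) = monomial (Finsupp.single s 1) 1 := by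
    intro s; rw [← X_pow_eq_monomial, pow_one]
  rw [hX, hX, hX, monomial_mul, monomial_mul, mul_one, mul_one, add_zero, add_assoc]

lemma stmt10Qhom (φ : MvPolynomial (Fin h) ℂ) (hφ : φ.IsHomogeneous 3) : stmt10Q φ := by
  rw [φ.as_sum]
  apply Finset.sum_induction _ stmt10Q (fun _ _ => stmt10Qadd) stmt10Qzero
  intro d hd
  have hdeg : d.degree = 3 := by
    rw [Finsupp.degree_eq_weight_one]
    exact hφ (MvPolynomial.mem_support_iff.mp hd)
  obtain ⟨a, b, c, hm⟩ := stmt10monomial3 d hdeg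
  have hsm : (monomial d (coeff d φ)) = coeff d φ • (monomial d (1:ℂ)) := by
    rw [smul_monomial, smul_eq_mul, mul_one]
  rw [hsm, hm]
  exact stmt10Qsmul _ (stmt10Qmono a b c)

lemma stmt10swap (n : ℕ) (b d : Fin n → ℂ) (H : Fin n → Fin n → ℂ)
    (hH : ∀ i j, H i j = H j i) :
    ∑ j, (∑ i, b i * H i j) * d j = ∑ j, b j * ∑ i, d i * H i j := by
  simp only [Finset.sum_mul, Finset.mul_sum]
  rw [Finset.sum_comm]
  exact Finset.sum_congr rfl fun j _ => Finset.sum_congr rfl fun i _ => by rw [hH j i]; ring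

lemma stmt10euler (n : ℕ) (b v g : Fin n → ℂ) (H : Fin n → Fin n → ℂ)
    (hH : ∀ i j, H i j = H j i) (hE : ∀ j, ∑ i, v i * H i j = 2 * g j) :
    ∑ j, v j * (∑ i, b i * H i j) = 2 * ∑ i, b i * g i := by
  simp only [Finset.mul_sum]
  rw [Finset.sum_comm]
  have key : ∀ i, ∑ j, v j * (b i * H i j) = b i * (2 * g i) := by
    intro i
    have step : ∑ j, v j * (b i * H i j) = b i * ∑ j, v j * H j i := by
      rw [Finset.mul_sum]
      exact Finset.sum_congr rfl fun j _ => by rw [hH j i]; ring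
    rw [step, hE i]
  rw [Finset.sum_congr rfl fun i _ => key i]
  exact Finset.sum_congr rfl fun i _ => by ring

lemma stmt10a (n : ℕ) (v g : Fin n → ℂ) (H : Fin n → Fin n → ℂ) (P : ℂ)
    (hH : ∀ i j, H i j = H j i) (hE : ∀ j, ∑ i, v i * H i j = 2 * g j)
    (a b c d : Fin n → ℂ) (a0 b0 c0 d0 : ℂ) :
    (a0 - b0 * P - (∑ i, b i * g i) - ∑ i, a i * v i) * d0
      - b0 * (c0 - d0 * P - (∑ i, d i * g i) - ∑ i, c i * v i)
      + ∑ j, ((a j + b0 * g j + ∑ i, b i * H i j) * (d j + d0 * v j)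
        - (b j + b0 * v j) * (c j + d0 * g j + ∑ i, d i * H i j))
    = a0 * d0 - b0 * c0 + ∑ j, (a j * d j - b j * c j) := by
  have expand : ∀ j : Fin n,
      (a j + b0 * g j + ∑ i, b i * H i j) * (d j + d0 * v j)
        - (b j + b0 * v j) * (c j + d0 * g j + ∑ i, d i * H i j)
      = (a j * d j - b j * c j) + (a j * v j) * d0 - b0 * (c j * v j)
        + b0 * (d j * g j) - (b j * g j) * d0
        + ((∑ i, b i * H i j) * d j - b j * (∑ i, d i * H i j))
        + d0 * (v j * (∑ i, b i * H i j)) - b0 * (v j * (∑ i, d i * H i j)) := fun j => by ring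
  rw [Finset.sum_congr rfl fun j _ => expand j]
  simp only [Finset.sum_add_distrib, Finset.sum_sub_distrib, ← Finset.sum_mul, ← Finset.mul_sum]
  rw [stmt10swap n b d H hH, stmt10euler n b v g H hH hE, stmt10euler n d v g H hH hE]
  ring

end StmtAux

/-- For a homogeneous cubic `φ`, the maps `T_v` are symplectic, translate the family
`ω(z)` via `T_v(ω(z)) = ω(z+v)`, and satisfy `T_v ∘ T_w = T_{v+w}`. -/
theorem stmt10 {h : ℕ} (hh : 1 ≤ h) (φ : MvPolynomial (Fin h) ℂ)
    (hφ : φ.IsHomogeneous 3) (v w : Fin h → ℂ) :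
    (∀ x y, symp (Tmap φ v x) (Tmap φ v y) = symp x y) ∧
    (∀ z : Fin h → ℂ, Tmap φ v (om φ z) = om φ (z + v)) ∧
    (∀ x, Tmap φ v (Tmap φ w x) = Tmap φ (v + w) x) := by
  obtain ⟨p1, p2, p3, p4, p5, p6⟩ := stmt10Qhom φ hφ
  refine ⟨?_, ?_, ?_⟩
  · -- (a) symplectic
    intro x y
    simp only [symp, Tmap, Fin.sum_univ_succ, Fin.cons_zero, Fin.cons_succ]
    exact stmt10a h v (fun j => aeval v (pderiv j φ))
      (fun i j => aeval v (pderiv i (pderiv j φ))) (aeval v φ)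
      (fun i j => p4 v i j) (fun j => p5 v j)
      (fun i => x.1 i.succ) (fun i => x.2 i.succ) (fun i => y.1 i.succ) (fun i => y.2 i.succ)
      (x.1 0) (x.2 0) (y.1 0) (y.2 0)
  · -- (b) translation of the family ω
    intro z
    refine Prod.ext ?_ ?_
    · funext t
      refine Fin.cases ?_ ?_ t
      · simp only [Tmap, om, Fin.cons_zero, Fin.cons_succ]
        have hc : ∑ i, aeval z (pderiv i φ) * v i = ∑ i, v i * aeval z (pderiv i φ) :=
          Finset.sum_congr rfl fun i _ => mul_comm _ _
        rw [p1 z v, hc]; ring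
      · intro j
        simp only [Tmap, om, Fin.cons_zero, Fin.cons_succ]
        rw [p2 z v j]; ring
    · funext t
      refine Fin.cases ?_ ?_ t
      · simp only [Tmap, om, Fin.cons_zero]
      · intro i
        simp only [Tmap, om, Fin.cons_zero, Fin.cons_succ, Pi.add_apply]
        ring
  · -- (c) composition
    intro x
    refine Prod.ext ?_ ?_
    · funext t
      refine Fin.cases ?_ ?_ t
      · simp only [Tmap, Fin.cons_zero, Fin.cons_succ, Pi.add_apply]
        rw [p1 v w]
        simp only [p2 v w]
        have swap : ∑ i, (∑ k, x.2 k.succ * aeval w (pderiv k (pderiv i φ))) * v i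
            = ∑ i, x.2 i.succ * ∑ k, v k * aeval w (pderiv k (pderiv i φ)) :=
          stmt10swap h (fun k => x.2 k.succ) v
            (fun k i => aeval w (pderiv k (pderiv i φ))) (fun i j => p4 w i j)
        have e1 : ∑ i, x.2 i.succ * (aeval v (pderiv i φ) + aeval w (pderiv i φ)
              + ∑ k, v k * aeval w (pderiv k (pderiv i φ)))
            = (∑ i, x.2 i.succ * aeval v (pderiv i φ))
              + (∑ i, x.2 i.succ * aeval w (pderiv i φ))
              + ∑ i, x.2 i.succ * ∑ k, v k * aeval w (pderiv k (pderiv i φ)) := by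
          simp only [mul_add, Finset.sum_add_distrib]
        have e2 : ∑ i, (x.2 i.succ + x.2 0 * w i) * aeval v (pderiv i φ)
            = (∑ i, x.2 i.succ * aeval v (pderiv i φ))
              + x.2 0 * ∑ i, w i * aeval v (pderiv i φ) := by
          simp only [add_mul, Finset.sum_add_distrib, Finset.mul_sum, mul_assoc]
        have e3 : ∑ i, (x.1 i.succ + x.2 0 * aeval w (pderiv i φ)
              + ∑ k, x.2 k.succ * aeval w (pderiv k (pderiv i φ))) * v i
            = (∑ i, x.1 i.succ * v i) + x.2 0 * (∑ i, aeval w (pderiv i φ) * v i)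
              + ∑ i, (∑ k, x.2 k.succ * aeval w (pderiv k (pderiv i φ))) * v i := by
          simp only [add_mul, Finset.sum_add_distrib, Finset.mul_sum, mul_assoc]
        have e4 : ∑ i, x.1 i.succ * (v i + w i)
            = (∑ i, x.1 i.succ * v i) + ∑ i, x.1 i.succ * w i := by
          simp only [mul_add, Finset.sum_add_distrib]
        have comm1 : ∑ i, aeval w (pderiv i φ) * v i = ∑ i, v i * aeval w (pderiv i φ) :=
          Finset.sum_congr rfl fun i _ => mul_comm _ _
        rw [e1, e2, e3, e4, swap, comm1]
        ring
      · intro j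
        simp only [Tmap, Fin.cons_zero, Fin.cons_succ, Pi.add_apply]
        rw [p2 v w j]
        simp only [p6 v w]
        have e5 : ∑ i, (x.2 i.succ + x.2 0 * w i) * aeval v (pderiv i (pderiv j φ))
            = (∑ i, x.2 i.succ * aeval v (pderiv i (pderiv j φ)))
              + x.2 0 * ∑ i, w i * aeval v (pderiv i (pderiv j φ)) := by
          simp only [add_mul, Finset.sum_add_distrib, Finset.mul_sum, mul_assoc]
        have e6 : ∑ i, x.2 i.succ * (aeval v (pderiv i (pderiv j φ))
              + aeval w (pderiv i (pderiv j φ)))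
            = (∑ i, x.2 i.succ * aeval v (pderiv i (pderiv j φ)))
              + ∑ i, x.2 i.succ * aeval w (pderiv i (pderiv j φ)) := by
          simp only [mul_add, Finset.sum_add_distrib]
        rw [e5, e6, p3 w v j]
        ring
    · funext t
      refine Fin.cases ?_ ?_ t
      · simp only [Tmap, Fin.cons_zero]
      · intro i
        simp only [Tmap, Fin.cons_zero, Fin.cons_succ, Pi.add_apply]
        ring
end

section
/- Let φ ∈ ℂ[z_1,…,z_h] be a homogeneous polynomial of degree 3, v ∈ ℂ^h, let T_v be the linear map on ℂ^{2h+2} defined by T_v f_0 = f_0 + Σ_i v_i f_i + Σ_i (∂φ/∂z_i)(v)e_i − φ(v)e_0, T_v f_i = f_i + Σ_j (∂²φ/∂z_i∂z_j)(v)e_j − (∂φ/∂z_i)(v)e_0, T_v e_i = e_i − v_i e_0, T_v e_0 = e_0, and let N = T_v − Id. Then: (i) N = 0 if and only if v = 0; (ii) N² = 0 if and only if (∂φ/∂z_i)(v) = 0 for every i ∈ {1,…,h} (so that N² = 0 and N ≠ 0 holds exactly when v ≠ 0 and v represents a singular point of the cubic hypersurface V(φ), noting that by Euler's relation the vanishing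 of all partial derivatives at v forces φ(v) = 0); and (iii) N³ = 0 if and only if φ(v) = 0 (so N³ ≠ 0 exactly when v does not lie on V(φ)). -/
/-!
`N` shifts the flag `f₀ ↦ ⟨f_i⟩ ↦ ⟨e_i⟩ ↦ e₀` one step up, with coefficients `v`, `∇φ(v)`,
`Hess φ(v)` and `φ(v)`. Composing, the symmetry of second partials and Euler's identities
`Σ vᵢ ∂ᵢφ(v) = 3 φ(v)`, `Σ vᵢ ∂ᵢ∂ⱼφ(v) = 2 ∂ⱼφ(v)` collapse the iterates to
`N²(a, b) = (-6 b₀ φ(v) - 2 Σ bₖ ∂ₖφ(v)) e₀ + 2 b₀ Σ ∂ⱼφ(v) eⱼ` and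
`N³(a, b) = -6 b₀ φ(v) e₀`.
Each implication `⇒` is read off from the value at `f₀`; conversely `∇φ(v) = 0` forces
`φ(v) = 0` by Euler.
-/

open MvPolynomial

/-- `N = T_v − Id`. -/
noncomputable def Nmap {h : ℕ} (φ : MvPolynomial (Fin h) ℂ) (v : Fin h → ℂ)
    (x : (Fin (h+1) → ℂ) × (Fin (h+1) → ℂ)) : (Fin (h+1) → ℂ) × (Fin (h+1) → ℂ) :=
  Tmap φ v x - x

namespace MvPolynomial

variable {R σ : Type*}

theorem pderiv_pderiv_comm [CommRing R] (i j : σ) (f : MvPolynomial σ R) :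
    pderiv i (pderiv j f) = pderiv j (pderiv i f) := by
  classical
  have hbracket : ⁅pderiv i, pderiv j⁆ = (0 : Derivation R (MvPolynomial σ R) _) :=
    derivation_ext fun k => by
      rw [Derivation.commutator_apply]
      simp [pderiv_X, Pi.single_apply, apply_ite]
  rw [← sub_eq_zero, ← Derivation.commutator_apply, hbracket, Derivation.zero_apply]

variable [CommSemiring R] {φ : MvPolynomial σ R} {n : ℕ}
  {S : Type*} [CommSemiring S] [Algebra R S]

theorem IsHomogeneous.sum_mul_aeval_pderiv [Fintype σ] (hφ : φ.IsHomogeneous n) (v : σ → S) :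
    ∑ i, v i * MvPolynomial.aeval v (pderiv i φ) = n * MvPolynomial.aeval v φ := by
  simpa [map_sum, nsmul_eq_mul] using congr(MvPolynomial.aeval v $(hφ.sum_X_mul_pderiv))

theorem IsHomogeneous.aeval_zero_eq_zero (hφ : φ.IsHomogeneous n) (hn : n ≠ 0) :
    MvPolynomial.aeval (0 : σ → S) φ = 0 := by
  rw [MvPolynomial.aeval_zero, constantCoeff_eq,
    hφ.coeff_eq_zero (by simpa using hn.symm), map_zero]

end MvPolynomial

theorem prod_fin_succ_eq_zero_iff {M : Type*} [Zero M] {n : ℕ}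
    (y : (Fin (n + 1) → M) × (Fin (n + 1) → M)) :
    y = 0 ↔
      (y.1 0 = 0 ∧ ∀ j : Fin n, y.1 j.succ = 0) ∧ (y.2 0 = 0 ∧ ∀ j : Fin n, y.2 j.succ = 0) := by
  simp [Prod.ext_iff, _root_.funext_iff, Fin.forall_fin_succ]

section Nmap

variable {h : ℕ} {φ : MvPolynomial (Fin h) ℂ} {v : Fin h → ℂ}
  (x : (Fin (h+1) → ℂ) × (Fin (h+1) → ℂ))

theorem Nmap_fst_zero : (Nmap φ v x).1 0 = -(x.2 0 * aeval v φ)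
    - ∑ i, x.2 i.succ * aeval v (pderiv i φ) - ∑ i, x.1 i.succ * v i := by
  simp only [Nmap, Tmap, Prod.fst_sub, Pi.sub_apply, Fin.cons_zero]
  ring

theorem Nmap_fst_succ (j : Fin h) : (Nmap φ v x).1 j.succ = x.2 0 * aeval v (pderiv j φ)
    + ∑ i, x.2 i.succ * aeval v (pderiv i (pderiv j φ)) := by
  simp only [Nmap, Tmap, Prod.fst_sub, Pi.sub_apply, Fin.cons_succ]
  ring

theorem Nmap_snd_zero : (Nmap φ v x).2 0 = 0 := by
  simp [Nmap, Tmap]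

theorem Nmap_snd_succ (i : Fin h) : (Nmap φ v x).2 i.succ = x.2 0 * v i := by
  simp [Nmap, Tmap]

theorem Nmap_sq_snd : (Nmap φ v (Nmap φ v x)).2 = 0 := by
  funext i
  induction i using Fin.cases <;> simp [Nmap_snd_zero, Nmap_snd_succ]

variable (hφ : φ.IsHomogeneous 3)
include hφ

theorem sum_mul_aeval_pderiv_of_cubic : ∑ i, v i * aeval v (pderiv i φ) = 3 * aeval v φ := by
  exact_mod_cast hφ.sum_mul_aeval_pderiv v

theorem sum_mul_aeval_pderiv_pderiv_of_cubic (j : Fin h) :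
    ∑ i, v i * aeval v (pderiv i (pderiv j φ)) = 2 * aeval v (pderiv j φ) := by
  exact_mod_cast hφ.pderiv.sum_mul_aeval_pderiv v

theorem Nmap_sq_fst_succ (j : Fin h) :
    (Nmap φ v (Nmap φ v x)).1 j.succ = 2 * x.2 0 * aeval v (pderiv j φ) := by
  simp only [Nmap_fst_succ, Nmap_snd_zero, Nmap_snd_succ, zero_mul, zero_add, mul_assoc,
    ← Finset.mul_sum, sum_mul_aeval_pderiv_pderiv_of_cubic hφ]
  ring

theorem sum_Nmap_fst_succ_mul : ∑ i, (Nmap φ v x).1 i.succ * v i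
    = 3 * x.2 0 * aeval v φ + 2 * ∑ k, x.2 k.succ * aeval v (pderiv k φ) := by
  have hfirst : ∑ i, x.2 0 * aeval v (pderiv i φ) * v i = 3 * x.2 0 * aeval v φ := by
    calc ∑ i, x.2 0 * aeval v (pderiv i φ) * v i
        = x.2 0 * ∑ i, v i * aeval v (pderiv i φ) := by
          rw [Finset.mul_sum]; exact Finset.sum_congr rfl fun i _ => by ring
      _ = 3 * x.2 0 * aeval v φ := by rw [sum_mul_aeval_pderiv_of_cubic hφ]; ring
  have hsecond (k : Fin h) : ∑ i, x.2 k.succ * aeval v (pderiv k (pderiv i φ)) * v i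
      = 2 * (x.2 k.succ * aeval v (pderiv k φ)) := by
    calc ∑ i, x.2 k.succ * aeval v (pderiv k (pderiv i φ)) * v i
        = x.2 k.succ * ∑ i, v i * aeval v (pderiv i (pderiv k φ)) := by
          rw [Finset.mul_sum]
          exact Finset.sum_congr rfl fun i _ => by rw [pderiv_pderiv_comm k i]; ring
      _ = 2 * (x.2 k.succ * aeval v (pderiv k φ)) := by
          rw [sum_mul_aeval_pderiv_pderiv_of_cubic hφ]; ring
  simp only [Nmap_fst_succ, add_mul, Finset.sum_add_distrib, Finset.sum_mul]
  rw [hfirst, Finset.sum_comm, Finset.sum_congr rfl fun k _ => hsecond k, ← Finset.mul_sum]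

theorem Nmap_sq_fst_zero : (Nmap φ v (Nmap φ v x)).1 0
    = -(6 * x.2 0 * aeval v φ) - 2 * ∑ k, x.2 k.succ * aeval v (pderiv k φ) := by
  rw [Nmap_fst_zero, sum_Nmap_fst_succ_mul _ hφ]
  simp only [Nmap_snd_zero, Nmap_snd_succ, mul_assoc, ← Finset.mul_sum,
    sum_mul_aeval_pderiv_of_cubic hφ]
  ring

theorem Nmap_cube_fst_succ (j : Fin h) : (Nmap φ v (Nmap φ v (Nmap φ v x))).1 j.succ = 0 := by
  rw [Nmap_sq_fst_succ _ hφ, Nmap_snd_zero, mul_zero, zero_mul]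

theorem Nmap_cube_fst_zero :
    (Nmap φ v (Nmap φ v (Nmap φ v x))).1 0 = -(6 * x.2 0 * aeval v φ) := by
  rw [Nmap_sq_fst_zero _ hφ]
  simp only [Nmap_snd_zero, Nmap_snd_succ, mul_assoc, ← Finset.mul_sum,
    sum_mul_aeval_pderiv_of_cubic hφ]
  ring

theorem Nmap_eq_zero_iff : (∀ x, Nmap φ v x = 0) ↔ v = 0 := by
  constructor
  · intro hN
    funext i
    simpa [Nmap_snd_succ] using congr($(hN (0, Pi.single 0 1)).2 i.succ)
  · rintro rfl x
    have hφ₀ : aeval (0 : Fin h → ℂ) φ = 0 := hφ.aeval_zero_eq_zero three_ne_zero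
    have hg₀ (i : Fin h) : aeval (0 : Fin h → ℂ) (pderiv i φ) = 0 :=
      hφ.pderiv.aeval_zero_eq_zero (by norm_num)
    have hH₀ (i j : Fin h) : aeval (0 : Fin h → ℂ) (pderiv i (pderiv j φ)) = 0 :=
      hφ.pderiv.pderiv.aeval_zero_eq_zero (by norm_num)
    simp [prod_fin_succ_eq_zero_iff, Nmap_fst_zero, Nmap_fst_succ, Nmap_snd_zero, Nmap_snd_succ,
      hφ₀, hg₀, hH₀]

theorem Nmap_sq_eq_zero_iff :
    (∀ x, Nmap φ v (Nmap φ v x) = 0) ↔ ∀ i, aeval v (pderiv i φ) = 0 := by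
  constructor
  · intro hN i
    simpa [Nmap_sq_fst_succ _ hφ] using congr($(hN (0, Pi.single 0 1)).1 i.succ)
  · intro hg x
    have hp : aeval v φ = 0 := by
      simpa [hg] using (sum_mul_aeval_pderiv_of_cubic (v := v) hφ).symm
    simp [prod_fin_succ_eq_zero_iff, Nmap_sq_fst_zero _ hφ, Nmap_sq_fst_succ _ hφ, Nmap_sq_snd,
      hg, hp]

theorem Nmap_cube_eq_zero_iff :
    (∀ x, Nmap φ v (Nmap φ v (Nmap φ v x)) = 0) ↔ aeval v φ = 0 := by
  constructor
  · intro hN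
    simpa [Nmap_cube_fst_zero _ hφ] using congr($(hN (0, Pi.single 0 1)).1 0)
  · intro hp x
    simp [prod_fin_succ_eq_zero_iff, Nmap_cube_fst_zero _ hφ, Nmap_cube_fst_succ _ hφ,
      Nmap_sq_snd, hp]

end Nmap

theorem stmt11_general {h : ℕ} (φ : MvPolynomial (Fin h) ℂ)
    (hφ : φ.IsHomogeneous 3) (v : Fin h → ℂ) :
    ((∀ x, Nmap φ v x = 0) ↔ v = 0) ∧
    ((∀ x, Nmap φ v (Nmap φ v x) = 0) ↔ ∀ i, aeval v (pderiv i φ) = 0) ∧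
    ((∀ x, Nmap φ v (Nmap φ v (Nmap φ v x)) = 0) ↔ aeval v φ = 0) :=
  ⟨Nmap_eq_zero_iff hφ, Nmap_sq_eq_zero_iff hφ, Nmap_cube_eq_zero_iff hφ⟩

/-- For a homogeneous cubic `φ` and `N = T_v − Id`:
`N = 0 ↔ v = 0`; `N² = 0 ↔ (∂φ/∂z_i)(v) = 0` for all `i` (i.e. `v` is a singular
point of the cubic `V(φ)` when `v ≠ 0`); `N³ = 0 ↔ φ(v) = 0` (i.e. `v` lies on
`V(φ)`). -/
theorem stmt11 {h : ℕ} (hh : 1 ≤ h) (φ : MvPolynomial (Fin h) ℂ)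
    (hφ : φ.IsHomogeneous 3) (v : Fin h → ℂ) :
    ((∀ x, Nmap φ v x = 0) ↔ v = 0) ∧
    ((∀ x, Nmap φ v (Nmap φ v x) = 0) ↔ ∀ i, aeval v (pderiv i φ) = 0) ∧
    ((∀ x, Nmap φ v (Nmap φ v (Nmap φ v x)) = 0) ↔ aeval v φ = 0) :=
  stmt11_general φ hφ v
end

section
/- Let φ ∈ ℝ[x_1,…,x_h] be a homogeneous polynomial of degree 3 and let y ∈ ℝ^h satisfy φ(y) < 0. Then the real symmetric h×h matrix M with entries M_{ij} = φ(y)·(∂²φ/∂x_i∂x_j)(y) − (∂φ/∂x_i)(y)·(∂φ/∂x_j)(y) is negative definite if and only if the Hessian matrix ((∂²φ/∂x_i∂x_j)(y))_{1≤i,j≤h} has exactly h−1 positive eigenvalues and exactly 1 negative eigenvalue (counted with multiplicity). -/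
/-!
By Euler's identity the Hessian form `H` of the cubic satisfies `H(y, ·) = 2 dφ(y)` and
`H(y, y) = 6 φ(y)`, so the quadratic form of `M` is `x ↦ φ(y) H(x, x) - H(y, x)² / 4`.
Writing `x = z + t y` with `z` `H`-orthogonal to `y`, this equals `φ(y) H(z, z) - 3 t² φ(y)²`;
hence `M` is negative definite iff `H` is positive definite on the `H`-orthogonal complement
of `y`. In an eigenbasis of the Hessian, and because `H(y, y) < 0`, the latter holds iff
exactly one eigenvalue is negative and all others are positive: two non-positive eigenvalues
would span a plane meeting the complement of `y`, while with a single negative eigenvalue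
`H` is positive on the hyperplane where that coordinate vanishes.
-/

open MvPolynomial Matrix Finset

theorem MvPolynomial.IsHomogeneous.sum_mul_eval_pderiv {σ R : Type*} [Fintype σ] [CommRing R]
    {φ : MvPolynomial σ R} {n : ℕ} (hφ : φ.IsHomogeneous n) (y : σ → R) :
    ∑ i, y i * eval y (pderiv i φ) = n * eval y φ := by
  simpa using congrArg (eval y) hφ.sum_X_mul_pderiv

namespace LinearMap.BilinForm

variable {V W : Type*} [AddCommGroup V] [Module ℝ V] [AddCommGroup W] [Module ℝ W]

def PosDefOnOrthogonal (B : LinearMap.BilinForm ℝ V) (y : V) : Prop :=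
  ∀ z, z ≠ 0 → B y z = 0 → 0 < B z z

theorem apply_smul_add_smul_self (B : LinearMap.BilinForm ℝ V) (hB : B.IsSymm) (y z : V)
    (a b : ℝ) :
    B (a • z + b • y) (a • z + b • y) =
      a ^ 2 * B z z + 2 * a * b * B y z + b ^ 2 * B y y := by
  simp only [map_add, map_smul, LinearMap.add_apply, LinearMap.smul_apply, smul_eq_mul,
    hB.eq z y]
  ring

theorem posDefOnOrthogonal_compl₁₂_iff (B : LinearMap.BilinForm ℝ V) (e : W ≃ₗ[ℝ] V)
    (y : W) :
    PosDefOnOrthogonal (B.compl₁₂ (e : W →ₗ[ℝ] V) (e : W →ₗ[ℝ] V)) y ↔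
      B.PosDefOnOrthogonal (e y) := by
  refine ⟨fun hB z hz hyz => ?_, fun hB z hz hyz => hB (e z) (by simpa using hz) hyz⟩
  simpa using hB (e.symm z) (by simpa using hz) (by simpa using hyz)

theorem forall_smul_sub_sq_neg_iff (B : LinearMap.BilinForm ℝ V) (hB : B.IsSymm) {y : V}
    {c k : ℝ} (hc : c < 0) (hy : c * B y y - k * B y y ^ 2 < 0) :
    (∀ x, x ≠ 0 → c * B x x - k * B y x ^ 2 < 0) ↔ B.PosDefOnOrthogonal y := by
  refine ⟨fun hneg z hz hyz => ?_, fun hpos x hx => ?_⟩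
  · have := hneg z hz
    rw [hyz] at this
    nlinarith
  have hyy : B y y ≠ 0 := by rintro h; simp [h] at hy
  set t := B y x / B y y
  set z := x - t • y
  have hyz : B y z = 0 := by
    simp only [z, map_sub, map_smul, smul_eq_mul, t]
    field_simp
    ring
  have hx_eq : x = z + t • y := by simp [z]
  have hQ : c * B x x - k * B y x ^ 2 = c * B z z + t ^ 2 * (c * B y y - k * B y y ^ 2) := by
    have hyx : B y x = t * B y y := by simp only [t]; field_simp
    have hxx := apply_smul_add_smul_self B hB y z 1 t
    rw [one_smul, ← hx_eq, hyz] at hxx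
    rw [hyx, hxx]
    ring
  rw [hQ]
  by_cases hz : z = 0
  · have ht : t ≠ 0 := by rintro ht; simp [hx_eq, hz, ht] at hx
    simp only [hz, map_zero, mul_zero, zero_add]
    exact mul_neg_of_pos_of_neg (by positivity) hy
  · nlinarith [hpos z hz hyz, sq_nonneg t]

end LinearMap.BilinForm

open LinearMap.BilinForm

section Diagonal

variable {ι : Type*} [Fintype ι] [DecidableEq ι]

theorem Matrix.toBilin'_diagonal_apply (lam x y : ι → ℝ) :
    toBilin' (diagonal lam) x y = ∑ i, lam i * x i * y i := by
  simp [toBilin'_apply', dotProduct, mulVec_diagonal, mul_left_comm, mul_assoc]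

variable {lam : ι → ℝ}

theorem card_nonpos_le_one_of_posDefOnOrthogonal {y : ι → ℝ}
    (hy : PosDefOnOrthogonal (toBilin' (diagonal lam)) y) : #{i | lam i ≤ 0} ≤ 1 := by
  refine card_le_one.mpr fun i hi j hj => by_contra fun hij => ?_
  simp only [mem_filter, mem_univ, true_and] at hi hj
  have hsingle : ∀ k, toBilin' (diagonal lam) y (Pi.single k 1) = lam k * y k := fun k => by
    simp [toBilin'_diagonal_apply, Pi.single_apply]
  by_cases ha : lam i * y i = 0
  · have := hy (Pi.single i 1) (by simp) (by rw [hsingle, ha])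
    simp only [toBilin'_single, diagonal_apply_eq] at this
    linarith
  -- `z` spans the kernel of `B y` on the plane of the coordinates `i` and `j`
  set z : ι → ℝ := (lam j * y j) • Pi.single i 1 - (lam i * y i) • Pi.single j 1
  have hz : z ≠ 0 := fun h => ha (by simpa [z, Pi.single_apply, hij] using congrFun h j)
  have := hy z hz (by simp only [z, map_sub, map_smul, hsingle, smul_eq_mul]; ring)
  simp only [z, map_sub, map_smul, LinearMap.sub_apply, LinearMap.smul_apply, toBilin'_single,
    diagonal_apply_eq, diagonal_apply_ne _ hij, diagonal_apply_ne _ (Ne.symm hij),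
    smul_eq_mul] at this
  nlinarith [mul_nonpos_of_nonpos_of_nonneg hi (sq_nonneg (lam j * y j)),
    mul_nonpos_of_nonpos_of_nonneg hj (sq_nonneg (lam i * y i))]

theorem exists_neg_of_toBilin'_diagonal_self_neg {y : ι → ℝ}
    (hy : toBilin' (diagonal lam) y y < 0) : ∃ i, lam i < 0 := by
  by_contra! h
  rw [toBilin'_diagonal_apply] at hy
  exact hy.not_ge (sum_nonneg fun i _ => by nlinarith [h i, mul_self_nonneg (y i)])

section UniqueNegative

variable {i₀ : ι} (hlam : ∀ i, i ≠ i₀ → 0 < lam i)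
include hlam

theorem toBilin'_diagonal_self_pos {w : ι → ℝ} (hw : w i₀ = 0) (hw0 : w ≠ 0) :
    0 < toBilin' (diagonal lam) w w := by
  obtain ⟨k, hk⟩ := Function.ne_iff.mp hw0
  have hki : k ≠ i₀ := by rintro rfl; exact hk hw
  rw [toBilin'_diagonal_apply]
  refine sum_pos' (fun i _ => ?_) ⟨k, mem_univ _, ?_⟩
  · rcases eq_or_ne i i₀ with rfl | hi
    · simp [hw]
    · nlinarith [hlam i hi, mul_self_nonneg (w i)]
  · rw [mul_assoc]
    exact mul_pos (hlam k hki) (mul_self_pos.mpr hk)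

theorem toBilin'_diagonal_self_nonneg {w : ι → ℝ} (hw : w i₀ = 0) :
    0 ≤ toBilin' (diagonal lam) w w := by
  rcases eq_or_ne w 0 with rfl | hw0
  · simp
  · exact (toBilin'_diagonal_self_pos hlam hw hw0).le

theorem posDefOnOrthogonal_of_forall_ne_pos {y : ι → ℝ}
    (hy : toBilin' (diagonal lam) y y < 0) :
    PosDefOnOrthogonal (toBilin' (diagonal lam)) y := by
  set B := toBilin' (diagonal lam)
  have hB : B.IsSymm := isSymm_toBilin'_iff_isSymm.mpr (isSymm_diagonal lam)
  intro z hz hyz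
  by_cases hz₀ : z i₀ = 0
  · exact toBilin'_diagonal_self_pos hlam hz₀ hz
  -- eliminate the coordinate `i₀` from `z` using `y`
  have hw := toBilin'_diagonal_self_nonneg hlam (w := y i₀ • z + (-z i₀) • y)
    (by simp only [Pi.add_apply, Pi.smul_apply, smul_eq_mul]; ring)
  rw [apply_smul_add_smul_self B hB, hyz] at hw
  have hzy : (-z i₀) ^ 2 * B y y < 0 :=
    mul_neg_of_pos_of_neg (sq_pos_of_ne_zero (neg_ne_zero.mpr hz₀)) hy
  exact pos_of_mul_pos_right (by linarith) (sq_nonneg (y i₀))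

end UniqueNegative

theorem posDefOnOrthogonal_toBilin'_diagonal_iff {y : ι → ℝ}
    (hy : toBilin' (diagonal lam) y y < 0) :
    PosDefOnOrthogonal (toBilin' (diagonal lam)) y ↔
      ∃ i₀, lam i₀ < 0 ∧ ∀ i, i ≠ i₀ → 0 < lam i := by
  refine ⟨fun hpos => ?_, fun ⟨_, _, hlam⟩ => posDefOnOrthogonal_of_forall_ne_pos hlam hy⟩
  obtain ⟨i₀, hi₀⟩ := exists_neg_of_toBilin'_diagonal_self_neg hy
  refine ⟨i₀, hi₀, fun i hi => not_le.mp fun hle => hi ?_⟩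
  exact card_le_one.mp (card_nonpos_le_one_of_posDefOnOrthogonal hpos) i (by simpa using hle)
    i₀ (by simpa using hi₀.le)

end Diagonal

section Hermitian

variable {ι : Type*} [Fintype ι] [DecidableEq ι]

theorem Matrix.IsHermitian.toBilin'_compl₁₂_eigenvectorUnitary {A : Matrix ι ι ℝ}
    (hA : A.IsHermitian) :
    (toBilin' A).compl₁₂
        (UnitaryGroup.toLinearEquiv hA.eigenvectorUnitary : (ι → ℝ) →ₗ[ℝ] ι → ℝ)
        (UnitaryGroup.toLinearEquiv hA.eigenvectorUnitary : (ι → ℝ) →ₗ[ℝ] ι → ℝ) =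
      toBilin' (diagonal hA.eigenvalues) := by
  have hdiag := hA.conjStarAlgAut_star_eigenvectorUnitary
  rw [Unitary.conjStarAlgAut_apply, RCLike.ofReal_real_eq_id, Function.id_comp,
    Unitary.coe_star, star_star, star_eq_conjTranspose,
    conjTranspose_eq_transpose_of_trivial] at hdiag
  rw [← hdiag, ← toBilin'_comp]
  rfl

theorem Matrix.IsHermitian.posDefOnOrthogonal_toBilin'_iff {A : Matrix ι ι ℝ}
    (hA : A.IsHermitian) {y : ι → ℝ} (hy : toBilin' A y y < 0) :
    PosDefOnOrthogonal (toBilin' A) y ↔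
      ∃ i₀, hA.eigenvalues i₀ < 0 ∧ ∀ i, i ≠ i₀ → 0 < hA.eigenvalues i := by
  set e := UnitaryGroup.toLinearEquiv hA.eigenvectorUnitary
  have hcompl := hA.toBilin'_compl₁₂_eigenvectorUnitary
  rw [← e.apply_symm_apply y] at hy ⊢
  rw [← posDefOnOrthogonal_compl₁₂_iff, hcompl, posDefOnOrthogonal_toBilin'_diagonal_iff]
  rwa [← hcompl]

end Hermitian

theorem card_pos_eq_and_card_neg_eq_one_iff {ι : Type*} [Fintype ι] [DecidableEq ι]
    (f : ι → ℝ) :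
    (#{i | 0 < f i} = Fintype.card ι - 1 ∧ #{i | f i < 0} = 1) ↔
      ∃ i₀, f i₀ < 0 ∧ ∀ i, i ≠ i₀ → 0 < f i := by
  constructor
  · rintro ⟨hpos, hneg⟩
    obtain ⟨i₀, hi₀⟩ := card_eq_one.mp hneg
    have hf₀ : f i₀ < 0 := by simpa using hi₀.symm.subset (mem_singleton_self i₀)
    have hsub : ({i | 0 < f i} : Finset ι) ⊆ univ.erase i₀ := fun i hi =>
      mem_erase.mpr ⟨by rintro rfl; simp at hi; linarith, mem_univ i⟩
    have heq := eq_of_subset_of_card_le hsub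
      (by rw [card_erase_of_mem (mem_univ _), hpos]; rfl)
    refine ⟨i₀, hf₀, fun i hi => ?_⟩
    simpa using heq.symm.subset (mem_erase.mpr ⟨hi, mem_univ i⟩)
  · rintro ⟨i₀, hf₀, hf⟩
    have hpos : ({i | 0 < f i} : Finset ι) = univ.erase i₀ := by
      ext i
      rcases eq_or_ne i i₀ with rfl | hi
      · simpa using hf₀.le
      · simp [hi, hf i hi]
    have hneg : ({i | f i < 0} : Finset ι) = {i₀} := by
      ext i
      rcases eq_or_ne i i₀ with rfl | hi
      · simpa using hf₀
      · simp [hi, (hf i hi).le]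
    rw [hpos, hneg, card_erase_of_mem (mem_univ _), card_univ, card_singleton]
    exact ⟨rfl, rfl⟩
/-- The key linear-algebra step for the Hodge–Riemann inequalities attached to a real
homogeneous cubic `φ`: if `φ(y) < 0`, then the matrix
`M_{ij} = φ(y)·(∂²φ/∂x_i∂x_j)(y) − (∂φ/∂x_i)(y)·(∂φ/∂x_j)(y)` is negative definite
if and only if the Hessian `((∂²φ/∂x_i∂x_j)(y))` has exactly `h−1` positive
eigenvalues and exactly `1` negative eigenvalue (with multiplicity). -/
theorem stmt13 {h : ℕ} (φ : MvPolynomial (Fin h) ℝ) (hφ : φ.IsHomogeneous 3)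
    (y : Fin h → ℝ) (hy : eval y φ < 0)
    (M : Matrix (Fin h) (Fin h) ℝ)
    (hM : M = Matrix.of fun i j =>
      eval y φ * eval y (pderiv i (pderiv j φ))
        - eval y (pderiv i φ) * eval y (pderiv j φ))
    (Hess : Matrix (Fin h) (Fin h) ℝ)
    (hHess : Hess = Matrix.of fun i j => eval y (pderiv i (pderiv j φ)))
    (hH : Hess.IsHermitian) :
    (∀ x : Fin h → ℝ, x ≠ 0 → x ⬝ᵥ M.mulVec x < 0) ↔
      ((Finset.univ.filter fun i => 0 < hH.eigenvalues i).card = h - 1 ∧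
        (Finset.univ.filter fun i => hH.eigenvalues i < 0).card = 1) := by
  set c := eval y φ
  set g : Fin h → ℝ := fun i => eval y (pderiv i φ)
  set B := toBilin' Hess
  have hB : B.IsSymm := isSymm_toBilin'_iff_isSymm.mpr (isHermitian_iff_isSymm.mp hH)
  have hvecMul : y ᵥ* Hess = (2 : ℝ) • g := funext fun j => by
    simpa [hHess, vecMul, dotProduct] using (hφ.pderiv (i := j)).sum_mul_eval_pderiv y
  have hBy : ∀ x, B y x = 2 * (g ⬝ᵥ x) := fun x => by
    rw [toBilin'_apply', dotProduct_mulVec, hvecMul, smul_dotProduct, smul_eq_mul]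
  have hByy : B y y = 6 * c := by
    rw [hBy, dotProduct_comm]
    have heuler := hφ.sum_mul_eval_pderiv y
    simp only [dotProduct, Nat.cast_ofNat] at heuler ⊢
    linarith
  have hMg : M = c • Hess - vecMulVec g g := by
    ext i j; simp [hM, hHess, vecMulVec, g]
  have hquad : ∀ x, x ⬝ᵥ M *ᵥ x = c * B x x - 1 / 4 * B y x ^ 2 := fun x => by
    rw [hMg, sub_mulVec, smul_mulVec, vecMulVec_mulVec, hBy, toBilin'_apply']
    simp only [op_smul_eq_smul, dotProduct_sub, dotProduct_smul, smul_eq_mul,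
      dotProduct_comm x g]
    ring
  simp_rw [hquad]
  rw [forall_smul_sub_sq_neg_iff B hB hy (by rw [hByy]; nlinarith),
    hH.posDefOnOrthogonal_toBilin'_iff (by linarith), ← card_pos_eq_and_card_neg_eq_one_iff,
    Fintype.card_fin]
end

section
/- Let k be a field of characteristic 0, W a finite-dimensional k-vector space with dual W∨, and B : W × W → W∨ a symmetric k-bilinear map such that the induced trilinear form C(w_1, w_2, w_3) := B(w_1, w_2)(w_3) is symmetric in all three arguments. On V = k × W × W∨ × k define the alternating form ⟨(t_1,v_1,ξ_1,s_1), (t_2,v_2,ξ_2,s_2)⟩ = s_1·t_2 − s_2·t_1 + ξ_1(v_2) − ξ_2(v_1), and for w ∈ W define the endomorphism N_w of V by N_w(t, v, ξ, s) = (0, t·w, B(w, v), −ξ(w)). Then: (a) N_{w_1}∘N_{w_2} = N_{w_2}∘N_{w_1} for all w_1, w_2 ∈ W; (b) ⟨N_w x, y⟩ + ⟨x, N_w y⟩ = 0 for all x, y ∈ V and w ∈ W; (c) N_w⁴ = 0; and (d) exp(N_w)(1, 0, 0, 0) = (1, w, (1/2)·B(w,w), −(1/6)·C(w,w,w)), where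 exp(N_w) = Id + N_w + N_w²/2 + N_w³/6. -/
/-- The symplectic form on `V = k × W × W∨ × k`:
`⟨(t₁,v₁,ξ₁,s₁), (t₂,v₂,ξ₂,s₂)⟩ = s₁t₂ − s₂t₁ + ξ₁(v₂) − ξ₂(v₁)`. -/
def sympl {k : Type*} [Field k] {W : Type*} [AddCommGroup W] [Module k W]
    (x y : k × W × Module.Dual k W × k) : k :=
  x.2.2.2 * y.1 - y.2.2.2 * x.1 + x.2.2.1 y.2.1 - y.2.2.1 x.2.1

/-- The nilpotent endomorphism `N_w(t, v, ξ, s) = (0, t·w, B(w,v), −ξ(w))`. -/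
def Nw {k : Type*} [Field k] {W : Type*} [AddCommGroup W] [Module k W]
    (B : W →ₗ[k] W →ₗ[k] Module.Dual k W) (w : W)
    (x : k × W × Module.Dual k W × k) : k × W × Module.Dual k W × k :=
  (0, x.1 • w, B w x.2.1, - x.2.2.1 w)

/-- The abelian unipotent action on the weight-three minuscule representation
`V = k ⊕ W ⊕ W∨ ⊕ k` in the Hermitian symmetric tube domain case:
the `N_w` commute, are infinitesimally symplectic, satisfy `N_w⁴ = 0`, and
`exp(N_w)(1,0,0,0) = (1, w, ½B(w,w), −(1/6)C(w,w,w))`. -/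
theorem stmt16 (k : Type*) [Field k] [CharZero k]
    (W : Type*) [AddCommGroup W] [Module k W] [FiniteDimensional k W]
    (B : W →ₗ[k] W →ₗ[k] Module.Dual k W)
    (hB : ∀ w₁ w₂, B w₁ w₂ = B w₂ w₁)
    (hC : ∀ w₁ w₂ w₃, B w₁ w₂ w₃ = B w₁ w₃ w₂) :
    (∀ (w₁ w₂ : W) (x : k × W × Module.Dual k W × k),
        Nw B w₁ (Nw B w₂ x) = Nw B w₂ (Nw B w₁ x)) ∧
    (∀ (w : W) (x y : k × W × Module.Dual k W × k),
        sympl (Nw B w x) y + sympl x (Nw B w y) = 0) ∧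
    (∀ (w : W) (x : k × W × Module.Dual k W × k),
        Nw B w (Nw B w (Nw B w (Nw B w x))) = 0) ∧
    (∀ w : W,
        (fun x : k × W × Module.Dual k W × k =>
            x + Nw B w x + (2 : k)⁻¹ • Nw B w (Nw B w x)
              + (6 : k)⁻¹ • Nw B w (Nw B w (Nw B w x)))
          ((1 : k), (0 : W), (0 : Module.Dual k W), (0 : k))
        = ((1 : k), w, (2 : k)⁻¹ • B w w, -((6 : k)⁻¹ * B w w w))) := by
  refine ⟨?_, ?_, ?_, ?_⟩
  · intro w₁ w₂ x
    simp only [Nw, Prod.mk.injEq, zero_smul, map_smul, LinearMap.map_smul₂,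
      LinearMap.smul_apply, map_neg, LinearMap.neg_apply, true_and]
    constructor
    · rw [hB]
    · rw [hB w₂ x.2.1, hC, hB]
  · intro w x y
    simp only [Nw, sympl, map_smul, smul_eq_mul, mul_zero,
      hC w y.2.1 x.2.1]
    ring
  · intro w x
    simp [Nw, Prod.ext_iff]
  · intro w
    simp [Nw, Prod.ext_iff, smul_smul, mul_comm]
end

section
/- Let k be a field of characteristic 0, W a finite-dimensional k-vector space with dual W∨, and B : W × W → W∨ a symmetric k-bilinear map whose induced trilinear form C(w_1, w_2, w_3) := B(w_1, w_2)(w_3) is symmetric in all three arguments. On V = k × W × W∨ × k define N_w(t, v, ξ, s) = (0, t·w, B(w, v), −ξ(w)) for w ∈ W. Then: (i) N_w = 0 if and only if w = 0; (ii) N_w² = 0 if and only if B(w, w) = 0; and (iii) N_w³ = 0 if and only if C(w, w, w) = 0. -/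
/-- Determination of the type of the unipotent monodromy `exp(N_w)`:
`N_w = 0 ↔ w = 0`, `N_w² = 0 ↔ B(w,w) = 0`, and `N_w³ = 0 ↔ C(w,w,w) = 0`. -/
theorem stmt17 (k : Type*) [Field k] [CharZero k]
    (W : Type*) [AddCommGroup W] [Module k W] [FiniteDimensional k W]
    (B : W →ₗ[k] W →ₗ[k] Module.Dual k W)
    (hB : ∀ w₁ w₂, B w₁ w₂ = B w₂ w₁)
    (hC : ∀ w₁ w₂ w₃, B w₁ w₂ w₃ = B w₁ w₃ w₂)
    (w : W) :
    ((∀ x : k × W × Module.Dual k W × k, Nw B w x = 0) ↔ w = 0) ∧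
    ((∀ x : k × W × Module.Dual k W × k, Nw B w (Nw B w x) = 0) ↔ B w w = 0) ∧
    ((∀ x : k × W × Module.Dual k W × k, Nw B w (Nw B w (Nw B w x)) = 0) ↔
        B w w w = 0) := by
  refine ⟨⟨fun h => ?_, fun h x => ?_⟩, ⟨fun h => ?_, fun h x => ?_⟩,
    ⟨fun h => ?_, fun h x => ?_⟩⟩
  · have := congrArg (fun y : k × W × Module.Dual k W × k => y.2.1)
      (h (1, 0, 0, 0))
    simpa [Nw] using this
  · subst h
    simp [Nw, Prod.ext_iff]
  · have := congrArg (fun y : k × W × Module.Dual k W × k => y.2.2.1)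
      (h (1, 0, 0, 0))
    simpa [Nw] using this
  · have h2 : ∀ v, B w v w = 0 := fun v => by rw [hC, h]; rfl
    simp [Nw, Prod.ext_iff, h, h2 x.2.1]
  · have := congrArg (fun y : k × W × Module.Dual k W × k => y.2.2.2)
      (h (1, 0, 0, 0))
    simpa [Nw] using this
  · simp [Nw, Prod.ext_iff, h]
end
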